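/- arXiv:1510.08529 — 13 statements merged into one kernel-verified Lean document; each statement's English description precedes it below -/
import Mathlib

section
/- Let b ≥ 2 and N ≥ 0 be integers, let n be a non-negative integer with n < b^N and base-b digits n_0, n_1, …, n_{N−1} (so n = n_{N−1}b^{N−1} + ⋯ + n_0). Let (p̄_k)_{k≥0} and (s̄_k)_{k≥0} be sequences of functions ℝ → ℝ satisfying the normalized Sheffer convolution identity s̄_k(x+y) = Σ_{j=0}^{k} p̄_j(x)·s̄_{k−j}(y) for all k ≥ 0 and all x, y ∈ ℝ. Then for all real numbers x_0, …, x_{N−1}, y_0, …, y_{N−1}: ∏_{i=0}^{N−1} s̄_{n_i}(x_i + y_i) = Σ_{m : 0 ≤ m ⪯_b n} ( ∏_{i=0}^{N−1} p̄_{m_i}(x_i) · ∏_{i=0}^{N−1} s̄_{n_i − m_i}(y_i) ), where the sum runs over all non-negative integers m that are digitally dominated by n in base b, and m_i denotes the i-th base-b digit of m. -/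
open Finset

lemma digit_mod_pow (b N i m : ℕ) (hi : i < N) :
    m % b ^ N / b ^ i % b = m / b ^ i % b := by
  rw [← Nat.mod_mul_right_div_self, ← Nat.mod_mul_right_div_self, ← pow_succ,
    Nat.mod_mod_of_dvd m (pow_dvd_pow b hi)]

lemma sum_digits_lt (b N : ℕ) (hb : 1 ≤ b) (g : ℕ → ℕ) (hg : ∀ i < N, g i < b) :
    ∑ i ∈ range N, g i * b ^ i < b ^ N := by
  induction N with
  | zero => simpa using Nat.one_pos
  | succ N ih =>
    rw [Finset.sum_range_succ, pow_succ]
    have h1 : ∑ i ∈ range N, g i * b ^ i < b ^ N :=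
      ih (fun i hi => hg i (hi.trans N.lt_succ_self))
    have h2 : g N * b ^ N ≤ (b - 1) * b ^ N :=
      Nat.mul_le_mul_right _ (Nat.le_sub_one_of_lt (hg N N.lt_succ_self))
    calc ∑ i ∈ range N, g i * b ^ i + g N * b ^ N
        < b ^ N + (b - 1) * b ^ N := by omega
      _ = b ^ N * b := by
          rw [Nat.sub_one_mul]
          have : b ^ N ≤ b * b ^ N := Nat.le_mul_of_pos_left _ hb
          rw [mul_comm (b^N) b]; omega

lemma digit_of_sum (b N k : ℕ) (hb : 1 ≤ b) (g : ℕ → ℕ) (hg : ∀ i < N, g i < b)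
    (hk : k < N) : (∑ i ∈ range N, g i * b ^ i) / b ^ k % b = g k := by
  have hsplit : range N = range (k+1) ∪ Ico (k+1) N := by
    simp only [Finset.range_eq_Ico]
    exact (Finset.Ico_union_Ico_eq_Ico (Nat.zero_le _) hk).symm

  have hdisj : Disjoint (range (k+1)) (Ico (k+1) N) := by
    simp [Finset.disjoint_left, Finset.mem_range, Finset.mem_Ico]
    omega
  rw [hsplit, Finset.sum_union hdisj]
  have hdvd : b ^ (k+1) ∣ ∑ i ∈ Ico (k+1) N, g i * b ^ i :=
    Finset.dvd_sum fun i hi => Dvd.dvd.mul_left (pow_dvd_pow b (Finset.mem_Ico.mp hi).1) _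
  obtain ⟨c, hc⟩ := hdvd
  rw [hc, ← Nat.mod_mul_right_div_self, ← pow_succ, Nat.add_mul_mod_self_left,
    Nat.mod_eq_of_lt (sum_digits_lt b (k+1) hb g (fun i hi => hg i (hi.trans_le hk))),
    Finset.sum_range_succ, Nat.add_mul_div_right _ _ (Nat.pow_pos (n := k) hb),
    Nat.div_eq_of_lt (sum_digits_lt b k hb g (fun i hi => hg i (hi.trans hk))), zero_add]

lemma sum_of_digits (b N m : ℕ) (hb : 1 ≤ b) (hm : m < b ^ N) :
    ∑ i ∈ range N, m / b ^ i % b * b ^ i = m := by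
  induction N generalizing m with
  | zero => simp at hm; simp [hm]
  | succ N ih =>
    rw [Finset.sum_range_succ]
    have h1 : ∑ i ∈ range N, m / b ^ i % b * b ^ i = m % b ^ N := by
      rw [show ∑ i ∈ range N, m / b ^ i % b * b ^ i
          = ∑ i ∈ range N, m % b ^ N / b ^ i % b * b ^ i from
        Finset.sum_congr rfl fun i hi => by
          rw [digit_mod_pow b N i m (Finset.mem_range.mp hi)]]
      exact ih _ (Nat.mod_lt _ (Nat.pow_pos (n := N) hb))
    have h2 : m / b ^ N % b = m / b ^ N := by
      apply Nat.mod_eq_of_lt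
      rw [Nat.div_lt_iff_lt_mul (Nat.pow_pos (n := N) hb)]
      have h3 := pow_succ b N
      have h4 : b * b ^ N = b ^ N * b := mul_comm _ _
      omega
    rw [h1, h2, mul_comm, Nat.mod_add_div]

/-- **Digital binomial theorem for Sheffer sequences.**
If `s k` is the renormalized Sheffer sequence with renormalized associated sequence `p k`
(i.e. `s̄_k(x+y) = Σ_{j=0}^k p̄_j(x) s̄_{k-j}(y)`), then for `n < b^N` with base-`b`
digits `n_i = n / b^i % b`,
`∏_i s̄_{n_i}(x_i + y_i) = Σ_{m ⪯_b n} (∏_i p̄_{m_i}(x_i)) (∏_i s̄_{n_i - m_i}(y_i))`. -/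
theorem digital_binomial_theorem_sheffer
    (b N : ℕ) (hb : 2 ≤ b) (n : ℕ) (hn : n < b ^ N)
    (p s : ℕ → ℝ → ℝ)
    (hconv : ∀ (k : ℕ) (x y : ℝ),
      s k (x + y) = ∑ j ∈ range (k + 1), p j x * s (k - j) y)
    (x y : ℕ → ℝ) :
    ∏ i ∈ range N, s (n / b ^ i % b) (x i + y i) =
      ∑ m ∈ (range (b ^ N)).filter
          (fun m => ∀ i ∈ range N, m / b ^ i % b ≤ n / b ^ i % b),
        (∏ i ∈ range N, p (m / b ^ i % b) (x i)) *
          ∏ i ∈ range N, s (n / b ^ i % b - m / b ^ i % b) (y i) := by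
  have hb1 : 1 ≤ b := by omega
  have hnd : ∀ i, n / b ^ i % b < b := fun i => Nat.mod_lt _ (by omega)
  simp only [hconv]
  rw [← Fin.prod_univ_eq_prod_range
    (fun i => ∑ j ∈ range (n / b ^ i % b + 1), p j (x i) * s (n / b ^ i % b - j) (y i)) N,
    Finset.prod_univ_sum]
  -- define extension of a Fin-indexed tuple
  set F : (Fin N → ℕ) → ℕ → ℕ := fun g j => if h : j < N then g ⟨j, h⟩ else 0 with hF
  refine (Finset.sum_nbij' (fun g => ∑ i ∈ range N, F g i * b ^ i)
    (fun m => fun i : Fin N => m / b ^ (i : ℕ) % b) ?_ ?_ ?_ ?_ ?_).symm.symm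
  · -- maps into filter
    intro g hg
    simp only [Fintype.mem_piFinset, Finset.mem_range] at hg
    have hgb : ∀ i < N, F g i < b := by
      intro i hi
      simp only [hF, dif_pos hi]
      exact lt_of_lt_of_le (hg ⟨i, hi⟩) (hnd i)
    simp only [Finset.mem_filter, Finset.mem_range]
    refine ⟨sum_digits_lt b N hb1 _ hgb, fun i hi => ?_⟩
    rw [digit_of_sum b N i hb1 _ hgb hi]
    simp only [hF, dif_pos hi]
    exact Nat.lt_succ_iff.mp (hg ⟨i, hi⟩)
  · -- inverse maps into piFinset
    intro m hm
    simp only [Finset.mem_filter, Finset.mem_range] at hm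
    simp only [Fintype.mem_piFinset, Finset.mem_range]
    intro i
    exact Nat.lt_succ_iff.mpr (hm.2 i i.isLt)
  · -- left inverse
    intro g hg
    funext i
    simp only [Fintype.mem_piFinset, Finset.mem_range] at hg
    have hgb : ∀ j < N, F g j < b := by
      intro j hj
      simp only [hF, dif_pos hj]
      exact lt_of_lt_of_le (hg ⟨j, hj⟩) (hnd j)
    show (∑ j ∈ range N, F g j * b ^ j) / b ^ (i : ℕ) % b = g i
    rw [digit_of_sum b N i hb1 _ hgb i.isLt]
    simp [hF, i.isLt]
  · -- right inverse
    intro m hm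
    simp only [Finset.mem_filter, Finset.mem_range] at hm
    have : ∀ i ∈ range N, F (fun i : Fin N => m / b ^ (i : ℕ) % b) i * b ^ i
        = m / b ^ i % b * b ^ i := by
      intro i hi
      simp [hF, Finset.mem_range.mp hi]
    show ∑ i ∈ range N, F (fun i : Fin N => m / b ^ (i : ℕ) % b) i * b ^ i = m
    rw [Finset.sum_congr rfl this, sum_of_digits b N m hb1 hm.1]
  · -- summand equality
    intro g hg
    rw [← Finset.prod_mul_distrib, ← Fin.prod_univ_eq_prod_range
      (fun i => p ((∑ j ∈ range N, F g j * b ^ j) / b ^ i % b) (x i)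
        * s (n / b ^ i % b - (∑ j ∈ range N, F g j * b ^ j) / b ^ i % b) (y i)) N]
    apply Finset.prod_congr rfl
    intro i _
    simp only [Fintype.mem_piFinset, Finset.mem_range] at hg
    have hgb : ∀ j < N, F g j < b := by
      intro j hj
      simp only [hF, dif_pos hj]
      exact lt_of_lt_of_le (hg ⟨j, hj⟩) (hnd j)
    rw [digit_of_sum b N i hb1 _ hgb i.isLt]
    simp [hF, i.isLt]
end

section
/- Let b ≥ 2 and N ≥ 0 be integers, let n be a non-negative integer with n < b^N and base-b digits n_0, n_1, …, n_{N−1}. Let (p̄_k)_{k≥0} be a sequence of functions ℝ → ℝ satisfying the normalized binomial-type identity p̄_k(x+y) = Σ_{j=0}^{k} p̄_j(x)·p̄_{k−j}(y) for all k ≥ 0 and all x, y ∈ ℝ. Then for all real numbers x_0, …, x_{N−1}, y_0, …, y_{N−1}: ∏_{i=0}^{N−1} p̄_{n_i}(x_i + y_i) = Σ_{m : 0 ≤ m ⪯_b n} ( ∏_{i=0}^{N−1} p̄_{m_i}(x_i) · ∏_{i=0}^{N−1} p̄_{n_i − m_i}(y_i) ), where the sum runs over all non-negative integers m digitally dominated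 by n in base b, and m_i denotes the i-th base-b digit of m. -/
open Finset

/-- **Digital binomial theorem for sequences of binomial type.**
If `p k` is a renormalized binomial-type sequence
(i.e. `p̄_k(x+y) = Σ_{j=0}^k p̄_j(x) p̄_{k-j}(y)`), then for `n < b^N` with base-`b`
digits `n_i = n / b^i % b`,
`∏_i p̄_{n_i}(x_i + y_i) = Σ_{m ⪯_b n} (∏_i p̄_{m_i}(x_i)) (∏_i p̄_{n_i - m_i}(y_i))`. -/
theorem digital_binomial_theorem_binomial_type
    (b N : ℕ) (hb : 2 ≤ b) (n : ℕ) (hn : n < b ^ N)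
    (p : ℕ → ℝ → ℝ)
    (hconv : ∀ (k : ℕ) (x y : ℝ),
      p k (x + y) = ∑ j ∈ range (k + 1), p j x * p (k - j) y)
    (x y : ℕ → ℝ) :
    ∏ i ∈ range N, p (n / b ^ i % b) (x i + y i) =
      ∑ m ∈ (range (b ^ N)).filter
          (fun m => ∀ i ∈ range N, m / b ^ i % b ≤ n / b ^ i % b),
        (∏ i ∈ range N, p (m / b ^ i % b) (x i)) *
          ∏ i ∈ range N, p (n / b ^ i % b - m / b ^ i % b) (y i) := by
  have hb0 : 0 < b := by omega
  induction N generalizing n x y with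
  | zero =>
    have : n = 0 := by simpa using hn
    subst this
    simp
  | succ N IH =>
    have hnb : n / b < b ^ N := by
      rw [Nat.div_lt_iff_lt_mul hb0, ← pow_succ]; exact hn
    have hdig : ∀ (m i : ℕ), m / b ^ (i + 1) = m / b / b ^ i := by
      intro m i
      rw [Nat.div_div_eq_div_mul, ← pow_succ']
    rw [Finset.prod_range_succ']
    simp only [hdig, pow_zero, Nat.div_one]
    rw [IH (n / b) hnb (fun i => x (i + 1)) (fun i => y (i + 1)), hconv,
      Finset.sum_mul_sum, ← Finset.sum_product']
    refine Finset.sum_nbij' (fun q => q.2 + b * q.1) (fun m => (m / b, m % b))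
      ?_ ?_ ?_ ?_ ?_
    · rintro ⟨m', j⟩ hq
      simp only [Finset.mem_product, Finset.mem_filter, Finset.mem_range] at hq ⊢
      obtain ⟨⟨hm1, hm2⟩, hj⟩ := hq
      have hjb : j < b := by
        have := Nat.mod_lt n hb0
        omega
      have hdiv : (j + b * m') / b = m' := by
        rw [Nat.add_mul_div_left _ _ hb0, Nat.div_eq_of_lt hjb, zero_add]
      have hmod : (j + b * m') % b = j := by
        rw [Nat.add_mul_mod_self_left, Nat.mod_eq_of_lt hjb]
      constructor
      · calc j + b * m' < b + b * m' := by omega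
          _ ≤ b * b ^ N := by
            rw [Nat.mul_comm b (b ^ N)] at *
            nlinarith
          _ = b ^ (N + 1) := by ring
      · intro i hi
        rcases i with _ | i
        · simp only [hmod, pow_zero, Nat.div_one]; omega
        · simp only [hdig, hdiv]
          exact hm2 i (by simp at hi ⊢; omega)
    · intro m hm
      simp only [Finset.mem_filter, Finset.mem_range] at hm
      obtain ⟨hm1, hm2⟩ := hm
      simp only [Finset.mem_product, Finset.mem_filter, Finset.mem_range]
      refine ⟨⟨?_, ?_⟩, ?_⟩
      · rw [Nat.div_lt_iff_lt_mul hb0, ← pow_succ]; exact hm1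
      · intro i hi
        have := hm2 (i + 1) (by simp at hi ⊢; omega)
        simpa [hdig] using this
      · have := hm2 0 (by simp)
        simp only [pow_zero, Nat.div_one] at this
        omega
    · rintro ⟨m', j⟩ hq
      simp only [Finset.mem_product, Finset.mem_filter, Finset.mem_range] at hq
      obtain ⟨⟨hm1, hm2⟩, hj⟩ := hq
      have hjb : j < b := by
        have := Nat.mod_lt n hb0
        omega
      have hdiv : (j + b * m') / b = m' := by
        rw [Nat.add_mul_div_left _ _ hb0, Nat.div_eq_of_lt hjb, zero_add]
      have hmod : (j + b * m') % b = j := by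
        rw [Nat.add_mul_mod_self_left, Nat.mod_eq_of_lt hjb]
      simp [hdiv, hmod]
    · intro m _
      simp [Nat.mod_add_div]
    · rintro ⟨m', j⟩ hq
      simp only [Finset.mem_product, Finset.mem_filter, Finset.mem_range] at hq
      obtain ⟨⟨hm1, hm2⟩, hj⟩ := hq
      have hjb : j < b := by
        have := Nat.mod_lt n hb0
        omega
      have hdiv : (j + b * m') / b = m' := by
        rw [Nat.add_mul_div_left _ _ hb0, Nat.div_eq_of_lt hjb, zero_add]
      have hmod : (j + b * m') % b = j := by
        rw [Nat.add_mul_mod_self_left, Nat.mod_eq_of_lt hjb]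
      rw [Finset.prod_range_succ', Finset.prod_range_succ']
      simp only [hdig, hdiv, pow_zero, Nat.div_one, hmod]
      ring
end

section
/- Let b ≥ 2 and N ≥ 0 be integers and set n = b^N − 1 (so every base-b digit of n equals b−1). Let (p̄_k)_{k≥0} and (s̄_k)_{k≥0} be sequences of functions ℝ → ℝ satisfying s̄_k(x+y) = Σ_{j=0}^{k} p̄_j(x)·s̄_{k−j}(y) for all k ≥ 0 and all x, y ∈ ℝ. Then for all real x, y: ( s̄_{b−1}(x + y) )^N = Σ_{m=0}^{b^N − 1} ( ∏_{i=0}^{N−1} p̄_{m_i}(x) · ∏_{i=0}^{N−1} s̄_{b−1−m_i}(y) ), where m_i denotes the i-th base-b digit of m. -/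
open Finset

/-- **Digital binomial theorem for Sheffer sequences, corollary for `n = b^N - 1`.**
If `s k` is the renormalized Sheffer sequence with renormalized associated sequence `p k`,
then `s̄_{b-1}(x+y)^N = Σ_{m=0}^{b^N-1} (∏_i p̄_{m_i}(x)) (∏_i s̄_{b-1-m_i}(y))`,
where `m_i = m / b^i % b` is the `i`-th base-`b` digit of `m`. -/
theorem digital_binomial_theorem_sheffer_power
    (b N : ℕ) (hb : 2 ≤ b)
    (p s : ℕ → ℝ → ℝ)
    (hconv : ∀ (k : ℕ) (x y : ℝ),
      s k (x + y) = ∑ j ∈ range (k + 1), p j x * s (k - j) y)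
    (x y : ℝ) :
    (s (b - 1) (x + y)) ^ N =
      ∑ m ∈ range (b ^ N),
        (∏ i ∈ range N, p (m / b ^ i % b) x) *
          ∏ i ∈ range N, s (b - 1 - m / b ^ i % b) y := by
  have hbpos : 0 < b := by omega
  induction N with
  | zero => simp
  | succ N ih =>
    have hb1 : b - 1 + 1 = b := by omega
    rw [pow_succ, ih, hconv (b - 1) x y, hb1, Finset.sum_mul_sum]
    rw [show b ^ (N + 1) = b ^ N * b from pow_succ b N]
    rw [← Finset.sum_product']
    refine Finset.sum_nbij' (fun qr => qr.2 + b * qr.1) (fun m => (m / b, m % b))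
      ?_ ?_ ?_ ?_ ?_
    · rintro ⟨q, r⟩ hqr
      simp only [Finset.mem_product, Finset.mem_range] at hqr ⊢
      calc r + b * q < b + b * q := by omega
        _ = b * (q + 1) := by ring
        _ ≤ b * b ^ N := by
            exact Nat.mul_le_mul_left b (by omega)
        _ = b ^ N * b := by ring
    · intro m hm
      simp only [Finset.mem_product, Finset.mem_range] at hm ⊢
      constructor
      · exact Nat.div_lt_of_lt_mul (by rwa [mul_comm] at hm)
      · exact Nat.mod_lt _ hbpos
    · rintro ⟨q, r⟩ hqr
      simp only [Finset.mem_product, Finset.mem_range] at hqr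
      simp [Nat.add_mul_div_left _ _ hbpos, Nat.div_eq_of_lt hqr.2,
        Nat.add_mul_mod_self_left, Nat.mod_eq_of_lt hqr.2]
    · intro m hm
      simp [Nat.mod_add_div]
    · rintro ⟨q, r⟩ hqr
      simp only [Finset.mem_product, Finset.mem_range] at hqr
      have h0 : (r + b * q) % b = r := by
        rw [Nat.add_mul_mod_self_left, Nat.mod_eq_of_lt hqr.2]
      have hdiv : (r + b * q) / b = q := by
        rw [Nat.add_mul_div_left _ _ hbpos, Nat.div_eq_of_lt hqr.2, zero_add]
      have hi : ∀ i, (r + b * q) / b ^ (i + 1) % b = q / b ^ i % b := by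
        intro i
        rw [pow_succ', ← Nat.div_div_eq_div_mul, hdiv]
      rw [Finset.prod_range_succ', Finset.prod_range_succ']
      simp only [pow_zero, Nat.div_one, h0, hi]
      ring
end

section
/- Let b ≥ 2 and N ≥ 0 be integers and set n = b^N − 1. Let (p̄_k)_{k≥0} be a sequence of functions ℝ → ℝ satisfying p̄_k(x+y) = Σ_{j=0}^{k} p̄_j(x)·p̄_{k−j}(y) for all k ≥ 0 and all x, y ∈ ℝ. Then for all real x, y: ( p̄_{b−1}(x + y) )^N = Σ_{m=0}^{b^N − 1} ( ∏_{i=0}^{N−1} p̄_{m_i}(x) · ∏_{i=0}^{N−1} p̄_{b−1−m_i}(y) ), where m_i denotes the i-th base-b digit of m. -/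
open Finset

lemma sum_range_mul' (f : ℕ → ℝ) (a c : ℕ) :
    ∑ m ∈ range (a * c), f m = ∑ d ∈ range a, ∑ r ∈ range c, f (d * c + r) := by
  induction a with
  | zero => simp
  | succ a ih =>
      rw [Nat.succ_mul, sum_range_add, ih, sum_range_succ]

lemma digit_lt (b N d m i : ℕ) (hb : 2 ≤ b) (hi : i < N) :
    (d * b ^ N + m) / b ^ i % b = m / b ^ i % b := by
  have hbi : 0 < b ^ i := pow_pos (by omega) i
  have e1 : N - i + i = N := by omega
  have h1 : d * b ^ N + m = m + d * b ^ (N - i) * b ^ i := by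
    rw [mul_assoc, ← pow_add, e1]; ring
  rw [h1, Nat.add_mul_div_right _ _ hbi]
  have e2 : N - i - 1 + 1 = N - i := by omega
  have h2 : d * b ^ (N - i) = d * b ^ (N - i - 1) * b := by
    rw [mul_assoc, ← pow_succ, e2]
  rw [h2, Nat.add_mul_mod_self_right]

lemma digit_eq (b N d m : ℕ) (hb : 2 ≤ b) (hd : d < b) (hm : m < b ^ N) :
    (d * b ^ N + m) / b ^ N % b = d := by
  have hbN : 0 < b ^ N := pow_pos (by omega) N
  rw [add_comm, Nat.add_mul_div_right _ _ hbN, Nat.div_eq_of_lt hm, zero_add,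
    Nat.mod_eq_of_lt hd]

/-- **Digital binomial theorem for binomial-type sequences, corollary for `n = b^N - 1`.**
If `p k` is a renormalized binomial-type sequence, then
`p̄_{b-1}(x+y)^N = Σ_{m=0}^{b^N-1} (∏_i p̄_{m_i}(x)) (∏_i p̄_{b-1-m_i}(y))`,
where `m_i = m / b^i % b` is the `i`-th base-`b` digit of `m`. -/
theorem digital_binomial_theorem_binomial_type_power
    (b N : ℕ) (hb : 2 ≤ b)
    (p : ℕ → ℝ → ℝ)
    (hconv : ∀ (k : ℕ) (x y : ℝ),
      p k (x + y) = ∑ j ∈ range (k + 1), p j x * p (k - j) y)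
    (x y : ℝ) :
    (p (b - 1) (x + y)) ^ N =
      ∑ m ∈ range (b ^ N),
        (∏ i ∈ range N, p (m / b ^ i % b) x) *
          ∏ i ∈ range N, p (b - 1 - m / b ^ i % b) y := by
  induction N with
  | zero => simp
  | succ N ih =>
      rw [show b ^ (N + 1) = b * b ^ N from pow_succ' b N, sum_range_mul',
        pow_succ, ih, hconv (b - 1) x y, show b - 1 + 1 = b by omega, mul_comm,
        sum_mul_sum]
      refine Finset.sum_congr rfl fun d hd => Finset.sum_congr rfl fun m hm => ?_
      rw [mem_range] at hd hm
      rw [prod_range_succ, prod_range_succ, digit_eq b N d m hb hd hm]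
      have hdig : ∀ i ∈ range N,
          (d * b ^ N + m) / b ^ i % b = m / b ^ i % b := fun i hi =>
        digit_lt b N d m i hb (mem_range.mp hi)
      have h1 : ∏ i ∈ range N, p ((d * b ^ N + m) / b ^ i % b) x
          = ∏ i ∈ range N, p (m / b ^ i % b) x :=
        Finset.prod_congr rfl fun i hi => by rw [hdig i hi]
      have h2 : ∏ i ∈ range N, p (b - 1 - (d * b ^ N + m) / b ^ i % b) y
          = ∏ i ∈ range N, p (b - 1 - m / b ^ i % b) y :=
        Finset.prod_congr rfl fun i hi => by rw [hdig i hi]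
      rw [h1, h2]
      ring
end

section
/- Let b ≥ 2 and N ≥ 0 be integers. Denote by B_k the k-th Bernoulli polynomial and set B̄_k(x) = B_k(x)/k!. Then for all rational (or real) x, y: ( B̄_{b−1}(x + y) )^N = Σ_{m=0}^{b^N − 1} ( ∏_{i=0}^{N−1} x^{m_i}/m_i! · ∏_{i=0}^{N−1} B̄_{b−1−m_i}(y) ), where m_i denotes the i-th base-b digit of m. In particular, since Σ_i m_i = s_b(m) is the base-b sum of digits of m, the first product equals x^{s_b(m)} / ∏_i m_i!. -/
open Finset

private lemma tri_swap (n : ℕ) (g : ℕ → ℕ → ℚ) :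
    ∑ i ∈ range n, ∑ k ∈ range (n - i), g i k =
      ∑ k ∈ range n, ∑ i ∈ range (n - k), g i k := by
  rw [← Finset.sum_range_diag_flip n g, ← Finset.sum_range_diag_flip n (fun a b => g b a)]
  refine sum_congr rfl fun m _ => ?_
  rw [← Finset.sum_range_reflect (fun k => g k (m - k)) (m + 1)]
  refine sum_congr rfl fun k hk => ?_
  rw [mem_range] at hk
  have h1 : m + 1 - 1 - k = m - k := by omega
  rw [h1]
  have h2 : m - (m - k) = k := by omega
  rw [h2]

private lemma bern_add (n : ℕ) (x y : ℚ) :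
    (Polynomial.bernoulli n).eval (x + y) =
      ∑ k ∈ range (n + 1),
        (n.choose k : ℚ) * x ^ k * (Polynomial.bernoulli (n - k)).eval y := by
  have L : (Polynomial.bernoulli n).eval (x + y)
      = ∑ i ∈ range (n + 1), ∑ k ∈ range (n + 1 - i),
          (_root_.bernoulli i : ℚ) * (n.choose i) * ((n - i).choose k) * x ^ k
            * y ^ (n - i - k) := by
    rw [Polynomial.bernoulli, Polynomial.eval_finset_sum]
    refine sum_congr rfl fun i hi => ?_
    rw [mem_range, Nat.lt_succ_iff] at hi
    rw [Polynomial.eval_monomial, add_pow, Finset.mul_sum]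
    have h : n + 1 - i = n - i + 1 := by omega
    rw [h]
    refine sum_congr rfl fun k _ => ?_
    ring
  have R : ∑ k ∈ range (n + 1),
        (n.choose k : ℚ) * x ^ k * (Polynomial.bernoulli (n - k)).eval y
      = ∑ k ∈ range (n + 1), ∑ i ∈ range (n + 1 - k),
          (n.choose k : ℚ) * ((n - k).choose i) * (_root_.bernoulli i : ℚ) * x ^ k
            * y ^ (n - k - i) := by
    refine sum_congr rfl fun k hk => ?_
    rw [mem_range, Nat.lt_succ_iff] at hk
    rw [Polynomial.bernoulli, Polynomial.eval_finset_sum, Finset.mul_sum]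
    have h : n + 1 - k = n - k + 1 := by omega
    rw [h]
    refine sum_congr rfl fun i _ => ?_
    rw [Polynomial.eval_monomial]
    ring
  rw [L, R, tri_swap]
  refine sum_congr rfl fun k hk => sum_congr rfl fun i hi => ?_
  rw [mem_range, Nat.lt_succ_iff] at hk
  rw [mem_range] at hi
  have hik : i + k ≤ n := by omega
  have h1 := Nat.choose_mul (n := n) (Nat.le_add_right i k)
  have h2 := Nat.choose_mul (n := n) (Nat.le_add_left k i)
  have e1 : i + k - i = k := by omega
  have e2 : i + k - k = i := by omega
  rw [e1] at h1
  rw [e2] at h2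
  have hsymm : (i + k).choose i = (i + k).choose k := Nat.choose_symm_add
  have hC : n.choose i * (n - i).choose k = n.choose k * (n - k).choose i := by
    rw [← h1, ← h2, hsymm]
  have hsub : n - i - k = n - k - i := by omega
  rw [hsub]
  have hCq : (n.choose i : ℚ) * ((n - i).choose k) = (n.choose k : ℚ) * ((n - k).choose i) := by
    exact_mod_cast congrArg (Nat.cast : ℕ → ℚ) hC
  linear_combination (x ^ k * y ^ (n - k - i) * (_root_.bernoulli i : ℚ)) * hCq

private lemma sum_range_mul_eq (a c : ℕ) (ha : 0 < a) (F : ℕ → ℚ) :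
    ∑ m ∈ range (a * c), F m = ∑ q ∈ range c, ∑ r ∈ range a, F (r + a * q) := by
  rw [← Finset.sum_product']
  refine Finset.sum_nbij' (fun m => (m / a, m % a)) (fun p => p.2 + a * p.1) ?_ ?_ ?_ ?_ ?_
  · intro m hm
    rw [mem_range] at hm
    simp only [Finset.mem_product, mem_range]
    exact ⟨Nat.div_lt_of_lt_mul (by omega), Nat.mod_lt _ ha⟩
  · intro p hp
    simp only [Finset.mem_product, mem_range] at hp
    rw [mem_range]
    calc p.2 + a * p.1 < a + a * p.1 := by omega
      _ = a * (p.1 + 1) := by ring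
      _ ≤ a * c := Nat.mul_le_mul_left a hp.1
  · intro m _
    simp [Nat.mod_add_div]
  · intro p hp
    simp only [Finset.mem_product, mem_range] at hp
    have h1 : (p.2 + a * p.1) / a = p.1 := by
      rw [Nat.add_mul_div_left _ _ ha, Nat.div_eq_of_lt hp.2, Nat.zero_add]
    have h2 : (p.2 + a * p.1) % a = p.2 := by
      rw [Nat.add_mul_mod_self_left, Nat.mod_eq_of_lt hp.2]
    simp [h1, h2]
  · intro m _
    simp [Nat.mod_add_div]

private lemma digit_sum (b : ℕ) (hb : 0 < b) (f : ℕ → ℚ) :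
    ∀ M : ℕ, ∑ m ∈ range (b ^ M), ∏ i ∈ range M, f (m / b ^ i % b)
      = (∑ j ∈ range b, f j) ^ M := by
  intro M
  induction M with
  | zero => simp
  | succ N ih =>
    have hpow : b ^ (N + 1) = b * b ^ N := by rw [pow_succ']
    rw [hpow, sum_range_mul_eq b (b ^ N) hb]
    have step : ∀ q ∈ range (b ^ N), ∀ r ∈ range b,
        (∏ i ∈ range (N + 1), f ((r + b * q) / b ^ i % b))
          = (∏ i ∈ range N, f (q / b ^ i % b)) * f r := by
      intro q _ r hr
      rw [mem_range] at hr
      rw [Finset.prod_range_succ']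
      congr 1
      · refine Finset.prod_congr rfl fun i _ => ?_
        congr 2
        have hdiv : (r + b * q) / b = q := by
          rw [Nat.add_mul_div_left _ _ hb, Nat.div_eq_of_lt hr, Nat.zero_add]
        rw [pow_succ', ← Nat.div_div_eq_div_mul, hdiv]
      · congr 1
        simp [Nat.add_mul_mod_self_left, Nat.mod_eq_of_lt hr]
    calc ∑ q ∈ range (b ^ N), ∑ r ∈ range b,
            ∏ i ∈ range (N + 1), f ((r + b * q) / b ^ i % b)
        = ∑ q ∈ range (b ^ N), ∑ r ∈ range b,
            (∏ i ∈ range N, f (q / b ^ i % b)) * f r := by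
          refine sum_congr rfl fun q hq => sum_congr rfl fun r hr => step q hq r hr
      _ = (∑ q ∈ range (b ^ N), ∏ i ∈ range N, f (q / b ^ i % b)) * ∑ r ∈ range b, f r := by
          rw [← Finset.sum_mul_sum]
      _ = (∑ j ∈ range b, f j) ^ (N + 1) := by rw [ih]; ring

/-- **Digital binomial theorem for Bernoulli polynomials (powers).**
With `B̄_k(x) = B_k(x)/k!` (normalized Bernoulli polynomial), for `b ≥ 2` and `N ≥ 0`:
`B̄_{b-1}(x+y)^N = Σ_{m=0}^{b^N-1} (∏_i x^{m_i}/m_i!) (∏_i B̄_{b-1-m_i}(y))`,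
where `m_i = m / b^i % b` is the `i`-th base-`b` digit of `m`. -/
theorem bernoulli_digital_binomial_theorem
    (b N : ℕ) (hb : 2 ≤ b) (x y : ℚ) :
    ((Polynomial.bernoulli (b - 1)).eval (x + y) / (Nat.factorial (b - 1) : ℚ)) ^ N =
      ∑ m ∈ range (b ^ N),
        (∏ i ∈ range N, x ^ (m / b ^ i % b) / (Nat.factorial (m / b ^ i % b) : ℚ)) *
          ∏ i ∈ range N,
            (Polynomial.bernoulli (b - 1 - m / b ^ i % b)).eval y /
              (Nat.factorial (b - 1 - m / b ^ i % b) : ℚ) := by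
  have hb0 : 0 < b := by omega
  set n := b - 1 with hn
  have hbn : b = n + 1 := by omega
  set g : ℕ → ℚ := fun j =>
    x ^ j / (Nat.factorial j : ℚ) *
      ((Polynomial.bernoulli (n - j)).eval y / (Nat.factorial (n - j) : ℚ)) with hg
  have key : (Polynomial.bernoulli n).eval (x + y) / (Nat.factorial n : ℚ)
      = ∑ j ∈ range b, g j := by
    rw [hbn, bern_add, sum_div]
    refine sum_congr rfl fun j hj => ?_
    rw [mem_range, Nat.lt_succ_iff] at hj
    have h := Nat.choose_mul_factorial_mul_factorial hj
    have hC : (n.choose j : ℚ) = (Nat.factorial n : ℚ) /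
        ((Nat.factorial j : ℚ) * (Nat.factorial (n - j) : ℚ)) := by
      rw [eq_div_iff (by positivity)]
      push_cast [← h]
      ring
    simp only [hg, hC]
    have hnf : (Nat.factorial n : ℚ) ≠ 0 := by positivity
    have hjf : (Nat.factorial j : ℚ) ≠ 0 := by positivity
    have hnjf : (Nat.factorial (n - j) : ℚ) ≠ 0 := by positivity
    field_simp
  calc ((Polynomial.bernoulli n).eval (x + y) / (Nat.factorial n : ℚ)) ^ N
      = (∑ j ∈ range b, g j) ^ N := by rw [key]
    _ = ∑ m ∈ range (b ^ N), ∏ i ∈ range N, g (m / b ^ i % b) :=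
        (digit_sum b hb0 g N).symm
    _ = _ := by
        refine sum_congr rfl fun m _ => ?_
        simp only [hg]
        rw [Finset.prod_mul_distrib]
end

section
/- Let b ≥ 2, N ≥ 0 be integers and let (s̄_k)_{k≥0} be any sequence of functions ℝ → ℝ with s̄_0 = 1 (constant). For real numbers x_0, …, x_N define the generalized Sierpiński matrix S_{b,N}(x_0,…,x_{N−1}) of size b^N × b^N by: its (j,k) entry equals ∏_{i=0}^{N−1} s̄_{d_i}(x_i) if 0 ≤ k ≤ j ≤ b^N − 1 and k ⪯_b j, where d_i is the i-th base-b digit of j − k, and equals 0 otherwise. Then, under the identification of the index j ∈ {0,…,b^{N+1}−1} with the pair (p, j′) where j = p·b^N + j′, 0 ≤ p ≤ b−1, 0 ≤ j′ ≤ b^N − 1, one has the Kronecker-product recurrence S_{b,N+1}(x_0,…,x_N) = S_{b,1}(x_N) ⊗ S_{b,N}(x_0,…,x_{N−1}), where S_{b,1}(x) is the b × b lower-triangular matrix with (j,k) entry s̄_{j−k}(x) for 0 ≤ k ≤ j ≤ b−1 and 0 otherwise. -/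
open Finset

lemma digit_add_low (b n c a i : ℕ) (hb : 0 < b) (hi : i < n) :
    (c * b ^ n + a) / b ^ i % b = a / b ^ i % b := by
  have hbi : 0 < b ^ i := Nat.pow_pos hb
  have h1 : c * b ^ n + a = a + b ^ i * (c * b ^ (n - i - 1) * b) := by
    have h2 : b ^ i * (b ^ (n - i - 1) * b) = b ^ n := by
      rw [← pow_succ, ← pow_add]; congr 1; omega
    calc c * b ^ n + a = a + c * (b ^ i * (b ^ (n - i - 1) * b)) := by rw [h2]; ring
      _ = a + b ^ i * (c * b ^ (n - i - 1) * b) := by ring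
  rw [h1, Nat.add_mul_div_left _ _ hbi, Nat.add_mul_mod_self_right]

lemma digit_top (b n c a : ℕ) (hb : 0 < b) (ha : a < b ^ n) (hc : c < b) :
    (c * b ^ n + a) / b ^ n % b = c := by
  have hbn : 0 < b ^ n := by positivity
  have h1 : c * b ^ n + a = a + b ^ n * c := by ring
  rw [h1, Nat.add_mul_div_left _ _ hbn, Nat.div_eq_of_lt ha, Nat.zero_add,
    Nat.mod_eq_of_lt hc]

lemma digit_le_of_le (b : ℕ) (hb : 2 ≤ b) :
    ∀ N k j : ℕ, k < b ^ N → (∀ i < N, k / b ^ i % b ≤ j / b ^ i % b) → k ≤ j := by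
  intro N
  induction N with
  | zero => intro k j hk _; simp at hk; omega
  | succ N ih =>
    intro k j hk hd
    have hb0 : 0 < b := by omega
    have hdiv : k / b ≤ j / b := by
      apply ih
      · rw [Nat.div_lt_iff_lt_mul hb0, ← pow_succ]; exact hk
      · intro i hi
        have h := hd (i + 1) (by omega)
        have e : ∀ m : ℕ, m / b / b ^ i = m / b ^ (i + 1) := fun m => by
          rw [Nat.div_div_eq_div_mul, ← pow_succ']
        rw [e, e]; exact h
    have hmod : k % b ≤ j % b := by simpa using hd 0 (by omega)
    have h1 := Nat.div_add_mod k b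
    have h2 := Nat.div_add_mod j b
    nlinarith [Nat.mul_le_mul_left b hdiv]


/-- The generalized Sierpiński matrix `S_{b,N}(x_0,…,x_{N-1})` attached to a sequence of
functions `s k : ℝ → ℝ`, viewed as a function of natural-number indices `j, k`:
its `(j,k)` entry is `∏_{i<N} s̄_{d_i}(x_i)` when `0 ≤ k ≤ j ≤ b^N - 1` and `k ⪯_b j`,
where `d_i = (j-k)/b^i % b` is the `i`-th base-`b` digit of `j - k`, and `0` otherwise. -/
noncomputable def sierpinskiEntry (b N : ℕ) (s : ℕ → ℝ → ℝ) (x : ℕ → ℝ) (j k : ℕ) : ℝ :=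
  if k ≤ j ∧ j ≤ b ^ N - 1 ∧ ∀ i ∈ range N, k / b ^ i % b ≤ j / b ^ i % b then
    ∏ i ∈ range N, s ((j - k) / b ^ i % b) (x i)
  else 0

/-- **Kronecker-product recurrence for generalized Sierpiński matrices:**
`S_{b,N+1}(x_0,…,x_N) = S_{b,1}(x_N) ⊗ S_{b,N}(x_0,…,x_{N-1})`, stated entrywise under the
identification of an index `j ∈ {0,…,b^{N+1}-1}` with the pair `(p, j')`, `j = p·b^N + j'`,
`0 ≤ p ≤ b-1`, `0 ≤ j' ≤ b^N - 1`. Here `S_{b,1}(x)` is the `b × b` lower-triangular matrix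
with `(p,q)` entry `s̄_{p-q}(x)` for `q ≤ p`, which is `sierpinskiEntry b 1 s (fun _ => x)`. -/
theorem sierpinski_kronecker_recurrence
    (b N : ℕ) (hb : 2 ≤ b) (s : ℕ → ℝ → ℝ) (hs0 : ∀ x : ℝ, s 0 x = 1)
    (x : ℕ → ℝ) (p q j' k' : ℕ) (hp : p < b) (hq : q < b)
    (hj' : j' < b ^ N) (hk' : k' < b ^ N) :
    sierpinskiEntry b (N + 1) s x (p * b ^ N + j') (q * b ^ N + k') =
      sierpinskiEntry b 1 s (fun _ => x N) p q * sierpinskiEntry b N s x j' k' := by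
  have hb0 : 0 < b := by omega
  have hbN : 0 < b ^ N := by positivity
  have hBsucc : b ^ (N + 1) = b * b ^ N := by rw [pow_succ, mul_comm]
  have hdj : ∀ i < N, (p * b ^ N + j') / b ^ i % b = j' / b ^ i % b :=
    fun i hi => digit_add_low b N p j' i hb0 hi
  have hdk : ∀ i < N, (q * b ^ N + k') / b ^ i % b = k' / b ^ i % b :=
    fun i hi => digit_add_low b N q k' i hb0 hi
  have hdjN : (p * b ^ N + j') / b ^ N % b = p := digit_top b N p j' hb0 hj' hp
  have hdkN : (q * b ^ N + k') / b ^ N % b = q := digit_top b N q k' hb0 hk' hq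
  unfold sierpinskiEntry
  simp only [mem_range]
  by_cases hC : q ≤ p ∧ k' ≤ j' ∧ ∀ i < N, k' / b ^ i % b ≤ j' / b ^ i % b
  · obtain ⟨h1, h2, h3⟩ := hC
    -- all three conditions hold
    have hle : q * b ^ N + k' ≤ p * b ^ N + j' := by
      have := Nat.mul_le_mul_right (b ^ N) h1; omega
    have hub : p * b ^ N + j' ≤ b ^ (N + 1) - 1 := by
      have hpb : (p + 1) * b ^ N ≤ b * b ^ N := Nat.mul_le_mul_right _ (by omega)
      rw [add_mul, one_mul] at hpb
      omega
    have hdig : ∀ i < N + 1,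
        (q * b ^ N + k') / b ^ i % b ≤ (p * b ^ N + j') / b ^ i % b := by
      intro i hi
      rcases Nat.lt_or_ge i N with h | h
      · rw [hdj i h, hdk i h]; exact h3 i h
      · have : i = N := by omega
        subst this
        rw [hdjN, hdkN]; exact h1
    rw [if_pos ⟨hle, hub, hdig⟩, if_pos ⟨h1, by rw [pow_one]; omega, fun i hi => by
        interval_cases i
        simp only [pow_zero, Nat.div_one]
        rw [Nat.mod_eq_of_lt hq, Nat.mod_eq_of_lt hp]
        exact h1⟩,
      if_pos ⟨h2, by omega, h3⟩]
    -- now the product identity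
    have hsub : p * b ^ N + j' - (q * b ^ N + k') = (p - q) * b ^ N + (j' - k') := by
      have e1 : (p - q) * b ^ N + q * b ^ N = p * b ^ N := by
        rw [← add_mul]; congr 1; omega
      omega
    have hjk : j' - k' < b ^ N := by omega
    have hpq : p - q < b := by omega
    rw [hsub, Finset.prod_range_succ, digit_top b N (p - q) (j' - k') hb0 hjk hpq]
    rw [mul_comm]
    congr 1
    · simp [Finset.prod_range_one, Nat.mod_eq_of_lt hpq]
    · exact Finset.prod_congr rfl fun i hi => by
        rw [digit_add_low b N (p - q) (j' - k') i hb0 (mem_range.mp hi)]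
  · -- condition fails; both sides are zero
    have hLnot : ¬(q * b ^ N + k' ≤ p * b ^ N + j' ∧ p * b ^ N + j' ≤ b ^ (N + 1) - 1 ∧
        ∀ i < N + 1, (q * b ^ N + k') / b ^ i % b ≤ (p * b ^ N + j') / b ^ i % b) := by
      rintro ⟨hle, hub, hdig⟩
      apply hC
      have h1 : q ≤ p := by
        have := hdig N (by omega); rwa [hdjN, hdkN] at this
      have h3 : ∀ i < N, k' / b ^ i % b ≤ j' / b ^ i % b := by
        intro i hi
        have := hdig i (by omega); rwa [hdj i hi, hdk i hi] at this
      exact ⟨h1, digit_le_of_le b hb N k' j' hk' h3, h3⟩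
    rw [if_neg hLnot]
    by_cases h1 : q ≤ p
    · have h2 : ¬(k' ≤ j' ∧ j' ≤ b ^ N - 1 ∧ ∀ i < N, k' / b ^ i % b ≤ j' / b ^ i % b) := by
        rintro ⟨a, _, c⟩; exact hC ⟨h1, a, c⟩
      rw [if_neg h2, mul_zero]
    · have h2 : ¬(q ≤ p ∧ p ≤ b ^ 1 - 1 ∧ ∀ i < 1, q / b ^ i % b ≤ p / b ^ i % b) := by
        rintro ⟨a, _, _⟩; exact h1 a
      rw [if_neg h2, zero_mul]
end

section
/- Let b ≥ 2 and N ≥ 0 be integers, and let (p̄_k)_{k≥0}, (s̄_k)_{k≥0} be sequences of functions ℝ → ℝ with p̄_0 = s̄_0 = 1 satisfying the normalized Sheffer convolution identity s̄_k(x+y) = Σ_{j=0}^{k} p̄_j(x)·s̄_{k−j}(y) for all k ≥ 0 and x, y ∈ ℝ. Define, for real x_0,…,x_{N−1}, the b^N × b^N matrices S_{b,N}(x_0,…,x_{N−1}) with (j,k) entry ∏_{i=0}^{N−1} s̄_{d_i}(x_i) if k ⪯_b j (d_i the i-th base-b digit of j−k) and 0 otherwise, and P_{b,N}(x_0,…,x_{N−1})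 with (j,k) entry ∏_{i=0}^{N−1} p̄_{d_i}(x_i) if k ⪯_b j and 0 otherwise. Then for all real x_0,…,x_{N−1}, y_0,…,y_{N−1}: P_{b,N}(x_0,…,x_{N−1}) · S_{b,N}(y_0,…,y_{N−1}) = S_{b,N}(x_0+y_0, …, x_{N−1}+y_{N−1}) (matrix multiplication). -/
open Finset

/-- The `b^N × b^N` generalized Sierpiński matrix attached to a sequence of functions
`f k : ℝ → ℝ` and variables `x_0, …, x_{N-1}`: its `(j,k)` entry is
`∏_{i<N} f_{d_i}(x_i)` when `k ⪯_b j` (digital dominance in base `b`), where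
`d_i = (j-k)/b^i % b` is the `i`-th base-`b` digit of `j - k`, and `0` otherwise. -/
noncomputable def sierpinskiMatrix (b N : ℕ) (f : ℕ → ℝ → ℝ) (x : ℕ → ℝ) :
    Matrix (Fin (b ^ N)) (Fin (b ^ N)) ℝ :=
  Matrix.of fun j k =>
    if ∀ i ∈ range N, (k : ℕ) / b ^ i % b ≤ (j : ℕ) / b ^ i % b then
      ∏ i ∈ range N, f (((j : ℕ) - (k : ℕ)) / b ^ i % b) (x i)
    else 0

lemma digit_ffe {b N : ℕ} (g : Fin N → Fin b) (i : Fin N) :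
    ((finFunctionFinEquiv g : Fin (b ^ N)) : ℕ) / b ^ (i : ℕ) % b = g i :=
  congrArg Fin.val (congrFun (finFunctionFinEquiv.symm_apply_apply g) i)

lemma ite_prod_univ {ι : Type*} [Fintype ι] (P : ι → Prop) [DecidablePred P] (f : ι → ℝ) :
    (if ∀ i, P i then ∏ i, f i else 0) = ∏ i, (if P i then f i else 0) := by
  split_ifs with h
  · exact Finset.prod_congr rfl fun i _ => (if_pos (h i)).symm
  · push_neg at h
    obtain ⟨i, hPi⟩ := h
    exact (Finset.prod_eq_zero (Finset.mem_univ i)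
      (show (if P i then f i else 0) = 0 from if_neg hPi)).symm

lemma sierpinski_apply (b N : ℕ) (f : ℕ → ℝ → ℝ) (z : ℕ → ℝ) (jf kf : Fin N → Fin b) :
    sierpinskiMatrix b N f z (finFunctionFinEquiv jf) (finFunctionFinEquiv kf) =
      if ∀ i : Fin N, (kf i : ℕ) ≤ jf i then
        ∏ i : Fin N, f ((jf i : ℕ) - (kf i : ℕ)) (z (i : ℕ)) else 0 := by
  unfold sierpinskiMatrix
  rw [Matrix.of_apply]
  have hcond : (∀ i ∈ range N,
      ((finFunctionFinEquiv kf : Fin (b ^ N)) : ℕ) / b ^ i % b ≤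
        ((finFunctionFinEquiv jf : Fin (b ^ N)) : ℕ) / b ^ i % b) ↔
      ∀ i : Fin N, (kf i : ℕ) ≤ jf i := by
    constructor
    · intro h i
      have := h (i : ℕ) (mem_range.mpr i.isLt)
      rwa [digit_ffe kf i, digit_ffe jf i] at this
    · intro h i hi
      rw [mem_range] at hi
      have := h ⟨i, hi⟩
      rwa [← digit_ffe jf ⟨i, hi⟩, ← digit_ffe kf ⟨i, hi⟩] at this
  rw [if_congr hcond rfl rfl]
  split_ifs with h
  · have hsub : ((finFunctionFinEquiv jf : Fin (b ^ N)) : ℕ) -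
        ((finFunctionFinEquiv kf : Fin (b ^ N)) : ℕ) =
        ((finFunctionFinEquiv (fun i =>
          (⟨(jf i : ℕ) - (kf i : ℕ), lt_of_le_of_lt (Nat.sub_le _ _) (jf i).isLt⟩ : Fin b)) :
            Fin (b ^ N)) : ℕ) := by
      rw [finFunctionFinEquiv_apply, finFunctionFinEquiv_apply, finFunctionFinEquiv_apply,
        ← Finset.sum_tsub_distrib _ (fun i _ => Nat.mul_le_mul_right _ (h i))]
      exact Finset.sum_congr rfl fun i _ => (Nat.sub_mul _ _ _).symm
    rw [Finset.prod_range]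
    refine Finset.prod_congr rfl fun i _ => ?_
    rw [hsub, digit_ffe]
  · rfl

lemma coord (b : ℕ) (p s : ℕ → ℝ → ℝ)
    (hconv : ∀ (k : ℕ) (x y : ℝ),
      s k (x + y) = ∑ j ∈ range (k + 1), p j x * s (k - j) y)
    (J K : Fin b) (hKJ : (K : ℕ) ≤ J) (x y : ℝ) :
    ∑ m : Fin b, (if (m : ℕ) ≤ (J : ℕ) then p ((J : ℕ) - m) x else 0) *
      (if (K : ℕ) ≤ (m : ℕ) then s ((m : ℕ) - K) y else 0) = s ((J : ℕ) - K) (x + y) := by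
  classical
  rw [Fin.sum_univ_eq_sum_range (fun m =>
    (if m ≤ (J : ℕ) then p ((J : ℕ) - m) x else 0) *
      (if (K : ℕ) ≤ m then s (m - K) y else 0))]
  have h1 : ∀ m : ℕ, (if m ≤ (J : ℕ) then p ((J : ℕ) - m) x else 0) *
      (if (K : ℕ) ≤ m then s (m - K) y else 0) =
      if m ∈ Finset.Icc (K : ℕ) (J : ℕ) then p ((J : ℕ) - m) x * s (m - K) y else 0 := by
    intro m
    by_cases hA : m ≤ (J : ℕ) <;> by_cases hB : (K : ℕ) ≤ m <;>
      simp [hA, hB, Finset.mem_Icc]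
  simp only [h1]
  rw [← Finset.sum_filter]
  have hfil : (range b).filter (· ∈ Finset.Icc (K : ℕ) (J : ℕ)) = Finset.Icc (K : ℕ) (J : ℕ) := by
    have hJ := J.isLt
    ext m
    simp only [Finset.mem_filter, Finset.mem_range, Finset.mem_Icc]
    omega
  rw [hfil, ← Finset.Ico_add_one_right_eq_Icc, Finset.sum_Ico_eq_sum_range]
  have hlen : (J : ℕ) + 1 - (K : ℕ) = (J : ℕ) - K + 1 := by omega
  rw [hlen, hconv ((J : ℕ) - K) x y,
    ← Finset.sum_range_reflect (fun j => p j x * s ((J : ℕ) - K - j) y) ((J : ℕ) - K + 1)]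
  refine Finset.sum_congr rfl fun t ht => ?_
  rw [Finset.mem_range] at ht
  have ht' : t ≤ (J : ℕ) - K := Nat.lt_succ_iff.mp ht
  have e1 : (J : ℕ) - ((K : ℕ) + t) = (J : ℕ) - K - t := by omega
  have e2 : (K : ℕ) + t - (K : ℕ) = t := by omega
  have e3 : (J : ℕ) - K + 1 - 1 - t = (J : ℕ) - K - t := by omega
  have e4 : (J : ℕ) - K - ((J : ℕ) - K - t) = t := by omega
  simp only [e1, e2, e3, e4]

/-- **Multiplicative property of generalized Sierpiński matrices of Sheffer type:**
if `p̄_0 = s̄_0 = 1` and `s̄_k(x+y) = Σ_{j=0}^k p̄_j(x) s̄_{k-j}(y)`, then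
`P_{b,N}(x_0,…,x_{N-1}) · S_{b,N}(y_0,…,y_{N-1}) = S_{b,N}(x_0+y_0,…,x_{N-1}+y_{N-1})`. -/
theorem sierpinski_matrix_multiplicative_sheffer
    (b N : ℕ) (hb : 2 ≤ b) (p s : ℕ → ℝ → ℝ)
    (hp0 : ∀ x : ℝ, p 0 x = 1) (hs0 : ∀ x : ℝ, s 0 x = 1)
    (hconv : ∀ (k : ℕ) (x y : ℝ),
      s k (x + y) = ∑ j ∈ range (k + 1), p j x * s (k - j) y)
    (x y : ℕ → ℝ) :
    sierpinskiMatrix b N p x * sierpinskiMatrix b N s y =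
      sierpinskiMatrix b N s (fun i => x i + y i) := by
  classical
  ext j k
  obtain ⟨jf, rfl⟩ := finFunctionFinEquiv.surjective j
  obtain ⟨kf, rfl⟩ := finFunctionFinEquiv.surjective k
  rw [Matrix.mul_apply, sierpinski_apply,
    ← Equiv.sum_comp finFunctionFinEquiv
      (fun m => sierpinskiMatrix b N p x (finFunctionFinEquiv jf) m *
        sierpinskiMatrix b N s y m (finFunctionFinEquiv kf))]
  simp only [sierpinski_apply]
  by_cases h : ∀ i : Fin N, (kf i : ℕ) ≤ jf i
  · rw [if_pos h]
    have key : ∀ mf : Fin N → Fin b,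
        (if ∀ i : Fin N, (mf i : ℕ) ≤ jf i then
            ∏ i : Fin N, p ((jf i : ℕ) - (mf i : ℕ)) (x (i : ℕ)) else 0) *
        (if ∀ i : Fin N, (kf i : ℕ) ≤ mf i then
            ∏ i : Fin N, s ((mf i : ℕ) - (kf i : ℕ)) (y (i : ℕ)) else 0) =
        ∏ i : Fin N, ((if (mf i : ℕ) ≤ (jf i : ℕ) then p ((jf i : ℕ) - mf i) (x (i : ℕ)) else 0) *
          (if (kf i : ℕ) ≤ (mf i : ℕ) then s ((mf i : ℕ) - kf i) (y (i : ℕ)) else 0)) := by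
      intro mf
      by_cases h1 : ∀ i : Fin N, (mf i : ℕ) ≤ jf i
      · by_cases h2 : ∀ i : Fin N, (kf i : ℕ) ≤ mf i
        · rw [if_pos h1, if_pos h2, ← Finset.prod_mul_distrib]
          exact Finset.prod_congr rfl fun i _ => by rw [if_pos (h1 i), if_pos (h2 i)]
        · obtain ⟨i, hi⟩ := not_forall.mp h2
          rw [if_neg h2, mul_zero]
          exact (Finset.prod_eq_zero (Finset.mem_univ i) (by rw [if_neg hi, mul_zero])).symm
      · obtain ⟨i, hi⟩ := not_forall.mp h1
        rw [if_neg h1, zero_mul]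
        exact (Finset.prod_eq_zero (Finset.mem_univ i) (by rw [if_neg hi, zero_mul])).symm
    simp only [key]
    rw [← Fintype.piFinset_univ, Finset.sum_prod_piFinset (Finset.univ : Finset (Fin b))
      (fun i m => (if (m : ℕ) ≤ (jf i : ℕ) then p ((jf i : ℕ) - m) (x (i : ℕ)) else 0) *
        (if (kf i : ℕ) ≤ (m : ℕ) then s ((m : ℕ) - kf i) (y (i : ℕ)) else 0))]
    · exact Finset.prod_congr rfl fun i _ => coord b p s hconv (jf i) (kf i) (h i) (x i) (y i)
  · rw [if_neg h]
    refine Finset.sum_eq_zero fun mf _ => ?_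
    obtain ⟨i, hi⟩ := not_forall.mp h
    by_cases h1 : ∀ i : Fin N, (mf i : ℕ) ≤ jf i
    · by_cases h2 : ∀ i : Fin N, (kf i : ℕ) ≤ mf i
      · exact absurd (le_trans (h2 i) (h1 i)) hi
      · rw [if_neg h2, mul_zero]
    · rw [if_neg h1, zero_mul]
end

section
/- Let b ≥ 2 and N ≥ 0 be integers, and let (p̄_k)_{k≥0} be a sequence of functions ℝ → ℝ with p̄_0 = 1 satisfying the normalized binomial-type identity p̄_k(x+y) = Σ_{j=0}^{k} p̄_j(x)·p̄_{k−j}(y) for all k ≥ 0 and x, y ∈ ℝ. Define, for real x_0,…,x_{N−1}, the b^N × b^N matrix P_{b,N}(x_0,…,x_{N−1}) with (j,k) entry ∏_{i=0}^{N−1} p̄_{d_i}(x_i) if k ⪯_b j (d_i the i-th base-b digit of j−k) and 0 otherwise. Then for all real x_0,…,x_{N−1}, y_0,…,y_{N−1}: P_{b,N}(x_0,…,x_{N−1}) · P_{b,N}(y_0,…,y_{N−1}) = P_{b,N}(x_0+y_0, …, x_{N−1}+y_{N−1}) (matrix multiplication). -/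
open Finset

lemma digit_eq_s9 {b N : ℕ} (J : Fin N → Fin b) (i : Fin N) :
    ((finFunctionFinEquiv J : ℕ)) / b ^ (i : ℕ) % b = J i :=
  congrArg Fin.val (congrFun (finFunctionFinEquiv.symm_apply_apply J) i)

lemma sub_eq {b N : ℕ} (J K : Fin N → Fin b) (h : ∀ i, (K i : ℕ) ≤ J i) :
    (finFunctionFinEquiv J : ℕ) - (finFunctionFinEquiv K : ℕ) =
      (finFunctionFinEquiv (fun i => (⟨(J i : ℕ) - K i,
        lt_of_le_of_lt (Nat.sub_le _ _) (J i).isLt⟩ : Fin b)) : ℕ) := by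
  simp only [finFunctionFinEquiv_apply]
  rw [← Finset.sum_tsub_distrib _ (fun i _ => Nat.mul_le_mul_right _ (h i))]
  congr 1
  ext i
  exact (Nat.sub_mul _ _ _).symm

lemma entry_eq {b N : ℕ} (f : ℕ → ℝ → ℝ) (x : ℕ → ℝ) (J K : Fin N → Fin b) :
    sierpinskiMatrix b N f x (finFunctionFinEquiv J) (finFunctionFinEquiv K) =
      if ∀ i, (K i : ℕ) ≤ (J i : ℕ) then
        ∏ i : Fin N, f ((J i : ℕ) - (K i : ℕ)) (x i) else 0 := by
  have hcond : (∀ i ∈ range N, ((finFunctionFinEquiv K : ℕ)) / b ^ i % b ≤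
      ((finFunctionFinEquiv J : ℕ)) / b ^ i % b) ↔ ∀ i, (K i : ℕ) ≤ (J i : ℕ) := by
    constructor
    · intro h i
      have := h i (mem_range.2 i.isLt)
      rwa [digit_eq_s9 J i, digit_eq_s9 K i] at this
    · intro h i hi
      rw [digit_eq_s9 J ⟨i, mem_range.1 hi⟩, digit_eq_s9 K ⟨i, mem_range.1 hi⟩]
      exact h _
  rw [sierpinskiMatrix]
  simp only [Matrix.of_apply]
  rw [if_congr hcond rfl rfl]
  split
  · next h =>
    rw [← Fin.prod_univ_eq_prod_range
      (fun i => f (((finFunctionFinEquiv J : ℕ) - (finFunctionFinEquiv K : ℕ)) / b ^ i % b) (x i)) N]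
    refine Finset.prod_congr rfl fun i _ => ?_
    rw [sub_eq J K h, digit_eq_s9]
  · rfl

lemma conv_eq {b : ℕ} (p : ℕ → ℝ → ℝ)
    (hconv : ∀ (k : ℕ) (x y : ℝ),
      p k (x + y) = ∑ j ∈ range (k + 1), p j x * p (k - j) y)
    (x y : ℝ) (a c : Fin b) (h : (c : ℕ) ≤ (a : ℕ)) :
    p ((a : ℕ) - c) (x + y) =
      ∑ l ∈ Finset.Icc c a, p ((a : ℕ) - l) x * p ((l : ℕ) - c) y := by
  have hmap : ∑ l ∈ Finset.Icc c a, p ((a : ℕ) - l) x * p ((l : ℕ) - c) y =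
      ∑ m ∈ Finset.Icc (c : ℕ) (a : ℕ), p ((a : ℕ) - m) x * p (m - c) y := by
    rw [← Fin.map_valEmbedding_Icc, Finset.sum_map]
    rfl
  rw [hmap, hconv, ← Finset.sum_range_reflect]
  rw [show Finset.Icc (c : ℕ) (a : ℕ) = Finset.Ico (c : ℕ) ((a : ℕ) + 1) by
    rw [Finset.Ico_add_one_right_eq_Icc]]
  rw [Finset.sum_Ico_eq_sum_range]
  rw [show (a : ℕ) + 1 - c = (a : ℕ) - c + 1 by omega]
  refine Finset.sum_congr rfl fun i hi => ?_
  rw [mem_range] at hi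
  have h1 : (a : ℕ) - c + 1 - 1 - i = (a:ℕ) - c - i := by omega
  have h2 : (a : ℕ) - c - ((a:ℕ) - c - i) = i := by omega
  have h3 : (a : ℕ) - ((c : ℕ) + i) = (a:ℕ) - c - i := by omega
  have h4 : (c : ℕ) + i - c = i := by omega
  rw [h1, h2, h3, h4]

/-- **Multiplicative property of generalized Sierpiński matrices of binomial type:**
if `p̄_0 = 1` and `p̄_k(x+y) = Σ_{j=0}^k p̄_j(x) p̄_{k-j}(y)`, then
`P_{b,N}(x_0,…,x_{N-1}) · P_{b,N}(y_0,…,y_{N-1}) = P_{b,N}(x_0+y_0,…,x_{N-1}+y_{N-1})`. -/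
theorem sierpinski_matrix_multiplicative_binomial_type
    (b N : ℕ) (hb : 2 ≤ b) (p : ℕ → ℝ → ℝ)
    (hp0 : ∀ x : ℝ, p 0 x = 1)
    (hconv : ∀ (k : ℕ) (x y : ℝ),
      p k (x + y) = ∑ j ∈ range (k + 1), p j x * p (k - j) y)
    (x y : ℕ → ℝ) :
    sierpinskiMatrix b N p x * sierpinskiMatrix b N p y =
      sierpinskiMatrix b N p (fun i => x i + y i) := by
  classical
  ext j k
  obtain ⟨J, rfl⟩ := finFunctionFinEquiv.surjective j
  obtain ⟨K, rfl⟩ := finFunctionFinEquiv.surjective k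
  rw [Matrix.mul_apply,
    ← Equiv.sum_comp finFunctionFinEquiv
      (fun l => sierpinskiMatrix b N p x (finFunctionFinEquiv J) l *
        sierpinskiMatrix b N p y l (finFunctionFinEquiv K))]
  simp only [entry_eq]
  by_cases hJK : ∀ i, (K i : ℕ) ≤ (J i : ℕ)
  · rw [if_pos hJK]
    have hrhs : ∏ i : Fin N, p ((J i : ℕ) - (K i : ℕ)) (x i + y i) =
        ∑ L ∈ Fintype.piFinset (fun i => Finset.Icc (K i) (J i)),
          ∏ i : Fin N, (p ((J i : ℕ) - (L i : ℕ)) (x i) * p ((L i : ℕ) - (K i : ℕ)) (y i)) := by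
      rw [Finset.prod_congr rfl fun (i : Fin N) _ => conv_eq p hconv (x ↑i) (y ↑i) (J i) (K i) (hJK i)]
      exact Finset.prod_univ_sum _ _
    rw [hrhs]
    simp only [ite_zero_mul_ite_zero]
    rw [← Finset.sum_filter]
    refine Finset.sum_congr ?_ fun L hL => (Finset.prod_mul_distrib).symm
    ext L
    simp only [Finset.mem_filter, Finset.mem_univ, true_and, Fintype.mem_piFinset,
      Finset.mem_Icc, Fin.le_def, forall_and]
    tauto
  · rw [if_neg hJK]
    refine Finset.sum_eq_zero fun L _ => ?_
    rcases Classical.em (∀ i, (L i : ℕ) ≤ (J i : ℕ)) with h1 | h1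
    · rcases Classical.em (∀ i, (K i : ℕ) ≤ (L i : ℕ)) with h2 | h2
      · exact absurd (fun i => le_trans (h2 i) (h1 i)) hJK
      · rw [if_neg h2, mul_zero]
    · rw [if_neg h1, zero_mul]
end

section
/- Let b ≥ 2, N ≥ 0, d ≥ 2 be integers, and let n < b^N have base-b digits n_0, …, n_{N−1}. Let (p̄_k)_{k≥0} and (s̄_k)_{k≥0} be sequences of functions ℝ → ℝ satisfying both s̄_k(x+y) = Σ_{j=0}^{k} p̄_j(x)·s̄_{k−j}(y) and p̄_k(x+y) = Σ_{j=0}^{k} p̄_j(x)·p̄_{k−j}(y) for all k ≥ 0, x, y ∈ ℝ. Then for any real numbers x_i^{(r)} (0 ≤ i ≤ N−1, 1 ≤ r ≤ d): ∏_{i=0}^{N−1} s̄_{n_i}(x_i^{(1)} + ⋯ + x_i^{(d)}) = Σ ( ∏_{i=0}^{N−1} p̄_{m_i^{(1)}}(x_i^{(1)}) · ∏_{i=0}^{N−1} p̄_{m_i^{(2)} − m_i^{(1)}}(x_i^{(2)}) ⋯ ∏_{i=0}^{N−1} p̄_{m_i^{(d−1)} − m_i^{(d−2)}}(x_i^{(d−1)})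 · ∏_{i=0}^{N−1} s̄_{n_i − m_i^{(d−1)}}(x_i^{(d)}) ), the sum running over all chains of non-negative integers 0 ⪯_b m^{(1)} ⪯_b m^{(2)} ⪯_b ⋯ ⪯_b m^{(d−1)} ⪯_b n, where m_i^{(r)} denotes the i-th base-b digit of m^{(r)}. -/
open Finset

/-- Extension of a chain `m^{(1)}, …, m^{(d-1)}` (given as a tuple `m : Fin (d-1) → ℕ`)
to all natural indices: `chainExt d n m 0 = 0`, `chainExt d n m r = m^{(r)}` for
`1 ≤ r ≤ d-1`, and `chainExt d n m r = n` for `r ≥ d`. -/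
def chainExt (d n : ℕ) (m : Fin (d - 1) → ℕ) : ℕ → ℕ :=
  fun r => if r = 0 then 0 else if h : r - 1 < d - 1 then m ⟨r - 1, h⟩ else n


lemma aux_sum_digits_lt (b N : ℕ) (hb : 1 ≤ b) (f : ℕ → ℕ) (hf : ∀ i < N, f i < b) :
    ∑ i ∈ range N, f i * b ^ i < b ^ N := by
  induction N with
  | zero => simpa using Nat.one_le_iff_ne_zero.mp (by simpa using hb)
  | succ N ih =>
    rw [Finset.sum_range_succ]
    have h1 := ih (fun i hi => hf i (by omega))
    have h2 : f N * b ^ N ≤ (b - 1) * b ^ N :=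
      Nat.mul_le_mul_right _ (by have := hf N (by omega); omega)
    have h4 : (b - 1) * b ^ N = b * b ^ N - b ^ N := Nat.sub_one_mul _ _
    have h5 : b ^ N ≤ b * b ^ N := Nat.le_mul_of_pos_left _ (by omega)
    have h3 : b ^ (N + 1) = b * b ^ N := by rw [pow_succ]; ring
    omega

lemma aux_digit_sum (b : ℕ) (hb : 2 ≤ b) :
    ∀ (j N : ℕ) (f : ℕ → ℕ), (∀ i, i < N → f i < b) → j < N →
      (∑ i ∈ range N, f i * b ^ i) / b ^ j % b = f j := by
  intro j
  induction j with
  | zero =>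
    intro N f hf hj
    obtain ⟨N', rfl⟩ : ∃ N', N = N' + 1 := ⟨N - 1, by omega⟩
    rw [Finset.sum_range_succ']
    have hrw : ∀ i, f (i + 1) * b ^ (i + 1) = b * (f (i + 1) * b ^ i) := by
      intro i; rw [pow_succ]; ring
    rw [Finset.sum_congr rfl fun i _ => hrw i, ← Finset.mul_sum]
    simp [Nat.mul_add_mod, Nat.mod_eq_of_lt (hf 0 (by omega))]
  | succ j ih =>
    intro N f hf hj
    obtain ⟨N', rfl⟩ : ∃ N', N = N' + 1 := ⟨N - 1, by omega⟩
    rw [Finset.sum_range_succ']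
    have hrw : ∀ i, f (i + 1) * b ^ (i + 1) = b * (f (i + 1) * b ^ i) := by
      intro i; rw [pow_succ]; ring
    rw [Finset.sum_congr rfl fun i _ => hrw i, ← Finset.mul_sum, pow_zero, mul_one]
    have hdd : ∀ (a : ℕ), a / b ^ (j + 1) = a / b / b ^ j := by
      intro a; rw [Nat.div_div_eq_div_mul, ← pow_succ']
    rw [hdd, Nat.mul_add_div (by omega), Nat.div_eq_of_lt (hf 0 (by omega)), Nat.add_zero]
    exact ih N' (fun i => f (i + 1)) (fun i hi => hf (i + 1) (by omega)) (by omega)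

lemma aux_sum_digit_eq (b : ℕ) (hb : 2 ≤ b) :
    ∀ (N m : ℕ), m < b ^ N → ∑ i ∈ range N, m / b ^ i % b * b ^ i = m := by
  intro N
  induction N with
  | zero =>
    intro m hm
    simp only [pow_zero, Nat.lt_one_iff] at hm
    subst hm; simp
  | succ N ih =>
    intro m hm
    rw [Finset.sum_range_succ']
    have hrw : ∀ i, m / b ^ (i + 1) % b * b ^ (i + 1) = b * (m / b / b ^ i % b * b ^ i) := by
      intro i
      rw [Nat.div_div_eq_div_mul, ← pow_succ', pow_succ]; ring
    rw [Finset.sum_congr rfl fun i _ => hrw i, ← Finset.mul_sum,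
      ih (m / b) (by rw [Nat.div_lt_iff_lt_mul (by omega)]; rw [pow_succ] at hm; exact hm)]
    simpa using Nat.div_add_mod m b

lemma aux_chain_mono {h : ℕ → ℕ} {d : ℕ} (hadj : ∀ r < d, h r ≤ h (r + 1)) :
    ∀ r' r, r ≤ r' → r' ≤ d → h r ≤ h r' := by
  intro r'
  induction r' with
  | zero => intro r h1 _; have : r = 0 := by omega
            subst this; exact le_rfl
  | succ r' ih =>
    intro r h1 h2
    rcases Nat.eq_or_lt_of_le h1 with h1 | h1
    · subst h1; exact le_rfl
    · exact (ih r (by omega) (by omega)).trans (hadj r' (by omega))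

lemma chainExt_digit (d n b i : ℕ) (m : Fin (d - 1) → ℕ) (r : ℕ) :
    chainExt d (n / b ^ i % b) (fun r' => m r' / b ^ i % b) r = chainExt d n m r / b ^ i % b := by
  unfold chainExt
  split_ifs with h1 h2
  · simp
  · rfl
  · rfl

/-- The set of chains `0 ≤ c₁ ≤ ⋯ ≤ c_{d-1} ≤ k` for a single digit value `k`. -/
def chainSet (d k : ℕ) : Finset (Fin (d - 1) → ℕ) :=
  (Fintype.piFinset fun _ : Fin (d - 1) => range (k + 1)).filter
    (fun c => ∀ r ∈ range d, chainExt d k c r ≤ chainExt d k c (r + 1))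

lemma chainExt_zero (d n : ℕ) (m : Fin (d - 1) → ℕ) : chainExt d n m 0 = 0 := rfl

lemma chainExt_top (d n : ℕ) (m : Fin (d - 1) → ℕ) {r : ℕ} (hr : d ≤ r) (hd : 1 ≤ d) :
    chainExt d n m r = n := by
  unfold chainExt
  rw [if_neg (by omega), dif_neg (by omega)]

lemma chainExt_mid (d n : ℕ) (m : Fin (d - 1) → ℕ) {r : ℕ} (h1 : 1 ≤ r) (h2 : r - 1 < d - 1) :
    chainExt d n m r = m ⟨r - 1, h2⟩ := by
  unfold chainExt
  rw [if_neg (by omega), dif_pos]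

/-- `chainExt` of the "cons" of `j` and a chain `c'`. -/
lemma chainExt_cons (e k j : ℕ) (hj : j ≤ k) (c' : Fin e → ℕ) (r : ℕ) (hr : r ≤ e + 1) :
    chainExt (e + 2) k
      (fun t : Fin (e + 1) => if h : (t : ℕ) = 0 then j
        else j + c' ⟨(t : ℕ) - 1, by have := t.isLt; omega⟩) (r + 1)
      = j + chainExt (e + 1) (k - j) c' r := by
  unfold chainExt
  rcases Nat.eq_zero_or_pos r with rfl | hr0
  · simp
  rw [if_neg (by omega), if_neg (by omega)]
  rcases Nat.lt_or_ge (r - 1) e with h | h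
  · rw [dif_pos (by omega : r + 1 - 1 < e + 2 - 1), dif_pos (by omega : r - 1 < e + 1 - 1)]
    simp only [Nat.add_sub_cancel, Fin.val_mk]
    rw [dif_neg (by omega : ¬ (r = 0))]
  · rw [dif_neg (by omega : ¬ (r + 1 - 1 < e + 2 - 1)), dif_neg (by omega : ¬ (r - 1 < e + 1 - 1))]
    omega

lemma chainExt_mid' (d n : ℕ) (m : Fin (d - 1) → ℕ) (t : Fin (d - 1)) :
    chainExt d n m ((t : ℕ) + 1) = m t := by
  unfold chainExt
  rw [if_neg (by omega), dif_pos (by simpa using t.isLt)]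
  exact congrArg m (Fin.ext (by simp))

set_option maxHeartbeats 1000000 in
lemma chain1 (p s : ℕ → ℝ → ℝ)
    (hconvS : ∀ (k : ℕ) (x y : ℝ),
      s k (x + y) = ∑ j ∈ range (k + 1), p j x * s (k - j) y) :
    ∀ d, 1 ≤ d → ∀ (k : ℕ) (x : ℕ → ℝ),
      s k (∑ r ∈ Icc 1 d, x r) =
        ∑ c ∈ chainSet d k,
          (∏ r ∈ range (d - 1), p (chainExt d k c (r + 1) - chainExt d k c r) (x (r + 1))) *
            s (k - chainExt d k c (d - 1)) (x d) := by
  intro d hd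
  induction d, hd using Nat.le_induction with
  | base =>
    intro k x
    have h1 : ∀ c ∈ chainSet 1 k,
        (∏ r ∈ range (1 - 1), p (chainExt 1 k c (r + 1) - chainExt 1 k c r) (x (r + 1))) *
          s (k - chainExt 1 k c (1 - 1)) (x 1) = s k (x 1) := by
      intro c _
      rw [show (1 : ℕ) - 1 = 0 from rfl, chainExt_zero]
      simp
    have hcard : (chainSet 1 k).card = 1 := by
      rw [chainSet, Finset.filter_true_of_mem, Fintype.card_piFinset]
      · simp
      · intro c _ r hr
        rw [Finset.mem_range] at hr
        have : r = 0 := by omega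
        subst this
        rw [chainExt_zero]
        exact Nat.zero_le _
    rw [Finset.Icc_self, Finset.sum_singleton, Finset.sum_congr rfl h1, Finset.sum_const,
      hcard, one_smul]
  | succ d hd IH =>
    intro k x
    obtain ⟨e, rfl⟩ : ∃ e, d = e + 1 := ⟨d - 1, by omega⟩
    have hsplit : ∑ r ∈ Icc 1 (e + 1 + 1), x r = x 1 + ∑ r ∈ Icc 1 (e + 1), x (r + 1) := by
      have h2 : Icc 2 (e + 1 + 1) = (Icc 1 (e + 1)).map (addRightEmbedding 1) := by
        rw [Finset.map_add_right_Icc]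
      have h1 : Icc 1 (e + 1 + 1) = insert 1 (Icc 2 (e + 1 + 1)) := by
        ext t; simp only [Finset.mem_Icc, Finset.mem_insert]; omega
      rw [h1, Finset.sum_insert (by simp), h2, Finset.sum_map]
      rfl
    have hIH : ∀ j ∈ range (k + 1),
        p j (x 1) * s (k - j) (∑ r ∈ Icc 1 (e + 1), x (r + 1)) =
          ∑ c' ∈ chainSet (e + 1) (k - j),
            p j (x 1) *
              ((∏ r ∈ range e,
                  p (chainExt (e + 1) (k - j) c' (r + 1) - chainExt (e + 1) (k - j) c' r)
                    (x (r + 2))) *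
                s ((k - j) - chainExt (e + 1) (k - j) c' e) (x (e + 1 + 1))) := by
      intro j _
      rw [IH (k - j) (fun r => x (r + 1)), Finset.mul_sum]
      rfl
    rw [hsplit, hconvS, Finset.sum_congr rfl hIH, Finset.sum_sigma']
    refine Finset.sum_nbij'
      (fun σ => fun t : Fin (e + 1) =>
        if h : (t : ℕ) = 0 then σ.1 else σ.1 + σ.2 ⟨(t : ℕ) - 1, by have := t.isLt; omega⟩)
      (fun c => ⟨c ⟨0, Nat.succ_pos e⟩,
        fun u : Fin e => c ⟨(u : ℕ) + 1, Nat.succ_lt_succ u.isLt⟩ - c ⟨0, Nat.succ_pos e⟩⟩)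
      ?_ ?_ ?_ ?_ ?_
    · -- forward membership
      rintro ⟨j, c'⟩ hσ
      simp only [Finset.mem_sigma, Finset.mem_range, chainSet, Finset.mem_filter,
        Fintype.mem_piFinset] at hσ ⊢
      obtain ⟨hjk, hc'v, hc'adj⟩ := hσ
      have hjk' : j ≤ k := by omega
      have key := chainExt_cons e k j hjk' c'
      refine ⟨?_, ?_⟩
      · intro t
        by_cases h : (t : ℕ) = 0
        · simp only [dif_pos h]; omega
        · simp only [dif_neg h]
          have := hc'v ⟨(t : ℕ) - 1, by have := t.isLt; omega⟩
          omega
      · intro r hr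
        rcases Nat.eq_zero_or_pos r with rfl | hr0
        · rw [chainExt_zero]; exact Nat.zero_le _
        · obtain ⟨r', rfl⟩ : ∃ r', r = r' + 1 := ⟨r - 1, by omega⟩
          rw [key r' (by omega), key (r' + 1) (by omega)]
          have := hc'adj r' (by omega)
          omega
    · -- backward membership
      intro c hc
      simp only [chainSet, Finset.mem_filter, Fintype.mem_piFinset, Finset.mem_range] at hc
      obtain ⟨hv, hadj⟩ := hc
      have hmono := aux_chain_mono (h := chainExt (e + 1 + 1) k c) (d := e + 2) hadj
      have hv0 : c ⟨0, Nat.succ_pos e⟩ ≤ k := by have := hv ⟨0, Nat.succ_pos e⟩; omega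
      have hle : ∀ t : Fin (e + 1), c ⟨0, Nat.succ_pos e⟩ ≤ c t := by
        intro t
        have h1 : chainExt (e + 1 + 1) k c (0 + 1) = c ⟨0, Nat.succ_pos e⟩ :=
          chainExt_mid' (e + 1 + 1) k c ⟨0, Nat.succ_pos e⟩
        have h2 : chainExt (e + 1 + 1) k c ((t : ℕ) + 1) = c t := chainExt_mid' (e + 1 + 1) k c t
        have h3 := hmono ((t : ℕ) + 1) (0 + 1) (by omega) (by have := t.isLt; omega)
        omega
      have key2 : ∀ r ≤ e + 1, chainExt (e + 1 + 1) k c (r + 1) =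
          c ⟨0, Nat.succ_pos e⟩ + chainExt (e + 1) (k - c ⟨0, Nat.succ_pos e⟩)
            (fun u : Fin e => c ⟨(u : ℕ) + 1, Nat.succ_lt_succ u.isLt⟩
              - c ⟨0, Nat.succ_pos e⟩) r := by
        intro r hr
        rcases Nat.eq_zero_or_pos r with rfl | hr0
        · rw [chainExt_zero]
          have h1 : chainExt (e + 1 + 1) k c (0 + 1) = c ⟨0, Nat.succ_pos e⟩ :=
            chainExt_mid' (e + 1 + 1) k c ⟨0, Nat.succ_pos e⟩
          omega
        obtain ⟨r', rfl⟩ : ∃ r', r = r' + 1 := ⟨r - 1, by omega⟩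
        rcases Nat.lt_or_ge r' e with h | h
        · have h1 : chainExt (e + 1 + 1) k c (r' + 1 + 1) = c ⟨r' + 1, Nat.succ_lt_succ h⟩ :=
            chainExt_mid' (e + 1 + 1) k c ⟨r' + 1, Nat.succ_lt_succ h⟩
          have h2 : chainExt (e + 1) (k - c ⟨0, Nat.succ_pos e⟩)
              (fun u : Fin e => c ⟨(u : ℕ) + 1, Nat.succ_lt_succ u.isLt⟩
                - c ⟨0, Nat.succ_pos e⟩) (r' + 1)
              = c ⟨r' + 1, Nat.succ_lt_succ h⟩ - c ⟨0, Nat.succ_pos e⟩ :=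
            chainExt_mid' (e + 1) (k - c ⟨0, Nat.succ_pos e⟩) _ ⟨r', h⟩
          have h5 := hle ⟨r' + 1, Nat.succ_lt_succ h⟩
          omega
        · have hre : r' = e := by omega
          have h1 : chainExt (e + 1 + 1) k c (r' + 1 + 1) = k :=
            chainExt_top (e + 1 + 1) k c (by omega) (by omega)
          have h2 : chainExt (e + 1) (k - c ⟨0, Nat.succ_pos e⟩)
              (fun u : Fin e => c ⟨(u : ℕ) + 1, Nat.succ_lt_succ u.isLt⟩
                - c ⟨0, Nat.succ_pos e⟩) (r' + 1) = k - c ⟨0, Nat.succ_pos e⟩ :=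
            chainExt_top (e + 1) (k - c ⟨0, Nat.succ_pos e⟩) _ (by omega) (by omega)
          omega
      simp only [Finset.mem_sigma, Finset.mem_range, chainSet, Finset.mem_filter,
        Fintype.mem_piFinset]
      refine ⟨by have := hv ⟨0, Nat.succ_pos e⟩; omega, ?_, ?_⟩
      · intro u
        have h1 := hv ⟨(u : ℕ) + 1, Nat.succ_lt_succ u.isLt⟩
        have h0 := hv ⟨0, Nat.succ_pos e⟩
        omega
      · intro r hr
        have k1 := key2 r (by omega)
        have k2 := key2 (r + 1) (by omega)
        have k3 := hadj (r + 1) (by omega)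
        omega
    · -- left inverse
      rintro ⟨j, c'⟩ hσ
      simp only []
      refine Sigma.ext ?_ (heq_of_eq ?_)
      · simp
      · funext u
        simp only [dif_neg (by omega : ¬ ((u : ℕ) + 1 = 0)), dif_pos rfl]
        have h3 : (⟨(u : ℕ) + 1 - 1, by have := u.isLt; omega⟩ : Fin e) = u :=
          Fin.ext (by simp)
        rw [h3]
        simp
    · -- right inverse
      intro c hc
      simp only [chainSet, Finset.mem_filter, Fintype.mem_piFinset, Finset.mem_range] at hc
      obtain ⟨hv, hadj⟩ := hc
      have hmono := aux_chain_mono (h := chainExt (e + 1 + 1) k c) (d := e + 2) hadj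
      have hle : ∀ t : Fin (e + 1), c ⟨0, Nat.succ_pos e⟩ ≤ c t := by
        intro t
        have h1 : chainExt (e + 1 + 1) k c (0 + 1) = c ⟨0, Nat.succ_pos e⟩ :=
          chainExt_mid' (e + 1 + 1) k c ⟨0, Nat.succ_pos e⟩
        have h2 : chainExt (e + 1 + 1) k c ((t : ℕ) + 1) = c t := chainExt_mid' (e + 1 + 1) k c t
        have h3 := hmono ((t : ℕ) + 1) (0 + 1) (by omega) (by have := t.isLt; omega)
        omega
      funext t
      simp only []
      split_ifs with h
      · exact congrArg c (Fin.ext h.symm)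
      · show c ⟨0, Nat.succ_pos e⟩ +
          (c ⟨(t : ℕ) - 1 + 1, Nat.succ_lt_succ (by have := t.isLt; omega)⟩
            - c ⟨0, Nat.succ_pos e⟩) = c t
        have h3 : (⟨(t : ℕ) - 1 + 1, Nat.succ_lt_succ (by have := t.isLt; omega)⟩
            : Fin (e + 1)) = t := Fin.ext (by simp; omega)
        have h4 := hle t
        have h5 := congrArg c h3
        omega
    · -- term equality
      rintro ⟨j, c'⟩ hσ
      simp only [Finset.mem_sigma, Finset.mem_range] at hσ
      have hjk : j ≤ k := by omega
      have key := chainExt_cons e k j hjk c'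
      simp only [Nat.add_sub_cancel]
      rw [Finset.prod_range_succ']
      have h0 : chainExt (e + 1 + 1) k
          (fun t : Fin (e + 1) => if h : (t : ℕ) = 0 then j
            else j + c' ⟨(t : ℕ) - 1, by have := t.isLt; omega⟩) 1 = j := by
        rw [key 0 (by omega), chainExt_zero]
        omega
      have hstep : ∀ r ∈ range e,
          p (chainExt (e + 1 + 1) k (fun t : Fin (e + 1) => if h : (t : ℕ) = 0 then j
              else j + c' ⟨(t : ℕ) - 1, by have := t.isLt; omega⟩) (r + 1 + 1) -
            chainExt (e + 1 + 1) k (fun t : Fin (e + 1) => if h : (t : ℕ) = 0 then j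
              else j + c' ⟨(t : ℕ) - 1, by have := t.isLt; omega⟩) (r + 1)) (x (r + 1 + 1)) =
          p (chainExt (e + 1) (k - j) c' (r + 1) - chainExt (e + 1) (k - j) c' r) (x (r + 2)) := by
        intro r hr
        rw [Finset.mem_range] at hr
        rw [key r (by omega), key (r + 1) (by omega), Nat.add_sub_add_left]
      rw [Finset.prod_congr rfl hstep, h0, chainExt_zero, Nat.sub_zero,
        key e (by omega)]
      rw [show k - (j + chainExt (e + 1) (k - j) c' e) =
        k - j - chainExt (e + 1) (k - j) c' e from by omega]
      ring

set_option maxHeartbeats 1000000 in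
/-- **Multinomial digital theorem for Sheffer sequences.**
For a renormalized Sheffer pair `(p̄, s̄)` and `n < b^N` with base-`b` digits
`n_i = n / b^i % b`, the product `∏_i s̄_{n_i}(x_i^{(1)} + ⋯ + x_i^{(d)})` equals the sum,
over all chains `0 ⪯_b m^{(1)} ⪯_b ⋯ ⪯_b m^{(d-1)} ⪯_b n` of non-negative integers,
of `(∏_i p̄_{m_i^{(1)}}(x_i^{(1)})) ⋯ (∏_i p̄_{m_i^{(d-1)} - m_i^{(d-2)}}(x_i^{(d-1)}))
· (∏_i s̄_{n_i - m_i^{(d-1)}}(x_i^{(d)}))`.  Here `X r i` denotes `x_i^{(r)}` for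
`1 ≤ r ≤ d`, chains are encoded as tuples `m : Fin (d-1) → ℕ` (each entry lies in
`{0, …, b^N - 1}`, which loses no generality since `m^{(r)} ⪯_b n < b^N`), and
`chainExt d n m` recovers the full chain with `m^{(0)} = 0` and `m^{(d)} = n`. -/
theorem multinomial_digital_theorem_sheffer
    (b N d : ℕ) (hb : 2 ≤ b) (hd : 2 ≤ d) (n : ℕ) (hn : n < b ^ N)
    (p s : ℕ → ℝ → ℝ)
    (hconvS : ∀ (k : ℕ) (x y : ℝ),
      s k (x + y) = ∑ j ∈ range (k + 1), p j x * s (k - j) y)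
    (hconvP : ∀ (k : ℕ) (x y : ℝ),
      p k (x + y) = ∑ j ∈ range (k + 1), p j x * p (k - j) y)
    (X : ℕ → ℕ → ℝ) :
    ∏ i ∈ range N, s (n / b ^ i % b) (∑ r ∈ Finset.Icc 1 d, X r i) =
      ∑ m ∈ (Fintype.piFinset fun _ : Fin (d - 1) => range (b ^ N)).filter
          (fun m => ∀ r ∈ range d, ∀ i ∈ range N,
            chainExt d n m r / b ^ i % b ≤ chainExt d n m (r + 1) / b ^ i % b),
        (∏ r ∈ range (d - 1), ∏ i ∈ range N,
            p (chainExt d n m (r + 1) / b ^ i % b - chainExt d n m r / b ^ i % b)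
              (X (r + 1) i)) *
          ∏ i ∈ range N,
            s (n / b ^ i % b - chainExt d n m (d - 1) / b ^ i % b) (X d i) := by
  have hdig : ∀ i : ℕ, n / b ^ i % b < b := fun i => Nat.mod_lt _ (by omega)
  -- expand each factor via chain1
  have hexp : ∀ i ∈ range N, s (n / b ^ i % b) (∑ r ∈ Finset.Icc 1 d, X r i) =
      ∑ c ∈ chainSet d (n / b ^ i % b),
        (∏ r ∈ range (d - 1),
            p (chainExt d (n / b ^ i % b) c (r + 1) - chainExt d (n / b ^ i % b) c r)
              (X (r + 1) i)) *
          s (n / b ^ i % b - chainExt d (n / b ^ i % b) c (d - 1)) (X d i) :=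
    fun i _ => chain1 p s hconvS d (by omega) (n / b ^ i % b) (fun r => X r i)
  rw [Finset.prod_congr rfl hexp,
    ← Fin.prod_univ_eq_prod_range (fun i =>
      ∑ c ∈ chainSet d (n / b ^ i % b),
        (∏ r ∈ range (d - 1),
            p (chainExt d (n / b ^ i % b) c (r + 1) - chainExt d (n / b ^ i % b) c r)
              (X (r + 1) i)) *
          s (n / b ^ i % b - chainExt d (n / b ^ i % b) c (d - 1)) (X d i)) N,
    Finset.prod_univ_sum]
  refine Finset.sum_nbij'
    (fun g => fun r : Fin (d - 1) =>
      ∑ i' ∈ range N, (if h : i' < N then g ⟨i', h⟩ r else 0) * b ^ i')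
    (fun m => fun i : Fin N => fun r : Fin (d - 1) => m r / b ^ (i : ℕ) % b)
    ?_ ?_ ?_ ?_ ?_
  · -- forward membership
    intro g hg
    simp only [Fintype.mem_piFinset, chainSet, Finset.mem_filter, Finset.mem_range] at hg
    have hglt : ∀ (i : Fin N) (r : Fin (d - 1)), g i r < b := by
      intro i r
      have := (hg i).1 r
      have := hdig (i : ℕ)
      omega
    have hφdig : ∀ (r : Fin (d - 1)) (i : Fin N),
        (∑ i' ∈ range N, (if h : i' < N then g ⟨i', h⟩ r else 0) * b ^ i') / b ^ (i : ℕ) % b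
          = g i r := by
      intro r i
      rw [aux_digit_sum b hb (i : ℕ) N _
        (fun i' hi' => by rw [dif_pos hi']; exact hglt ⟨i', hi'⟩ r) i.isLt]
      rw [dif_pos i.isLt]
    have hbr : ∀ (i : Fin N) (r : ℕ),
        chainExt d n
            (fun r' : Fin (d - 1) =>
              ∑ i' ∈ range N, (if h : i' < N then g ⟨i', h⟩ r' else 0) * b ^ i') r
            / b ^ (i : ℕ) % b
          = chainExt d (n / b ^ (i : ℕ) % b) (g i) r := by
      intro i r
      rw [← chainExt_digit d n b (i : ℕ) _ r]
      congr 1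
      funext r'
      exact hφdig r' i
    simp only [Finset.mem_filter, Fintype.mem_piFinset, Finset.mem_range]
    constructor
    · intro r
      exact aux_sum_digits_lt b N (by omega) _
        (fun i' hi' => by rw [dif_pos hi']; exact hglt ⟨i', hi'⟩ r)
    · intro r hr i hi
      have h1 := hbr ⟨i, hi⟩ r
      have h2 := hbr ⟨i, hi⟩ (r + 1)
      have h3 := (hg ⟨i, hi⟩).2 r (by omega)
      simp only [] at h1 h2 ⊢
      rw [h1, h2]
      exact h3
  · -- backward membership
    intro m hm
    simp only [Finset.mem_filter, Fintype.mem_piFinset, Finset.mem_range] at hm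
    obtain ⟨hmv, hmadj⟩ := hm
    simp only [Fintype.mem_piFinset, chainSet, Finset.mem_filter, Finset.mem_range]
    intro i
    have hmono := aux_chain_mono (h := fun r => chainExt d n m r / b ^ (i : ℕ) % b)
      (d := d) (fun r hr => hmadj r hr (i : ℕ) i.isLt)
    constructor
    · intro r
      have h1 : chainExt d n m ((r : ℕ) + 1) = m r := chainExt_mid' d n m r
      have h2 : chainExt d n m d = n := chainExt_top d n m (le_refl d) (by omega)
      have h3 := hmono d ((r : ℕ) + 1) (by have := r.isLt; omega) (le_refl d)
      rw [h1, h2] at h3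
      omega
    · intro r hr
      have h0 := chainExt_digit d n b (i : ℕ) m r
      have h1 := chainExt_digit d n b (i : ℕ) m (r + 1)
      rw [h0, h1]
      exact hmadj r hr (i : ℕ) i.isLt
  · -- left inverse
    intro g hg
    simp only [Fintype.mem_piFinset, chainSet, Finset.mem_filter, Finset.mem_range] at hg
    have hglt : ∀ (i : Fin N) (r : Fin (d - 1)), g i r < b := by
      intro i r
      have := (hg i).1 r
      have := hdig (i : ℕ)
      omega
    funext i r
    simp only []
    rw [aux_digit_sum b hb (i : ℕ) N _
      (fun i' hi' => by rw [dif_pos hi']; exact hglt ⟨i', hi'⟩ r) i.isLt]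
    rw [dif_pos i.isLt]
  · -- right inverse
    intro m hm
    simp only [Finset.mem_filter, Fintype.mem_piFinset, Finset.mem_range] at hm
    funext r
    simp only []
    have hcg : ∀ i' ∈ range N,
        (if h : i' < N then m r / b ^ (((⟨i', h⟩ : Fin N)) : ℕ) % b else 0) * b ^ i'
          = m r / b ^ i' % b * b ^ i' := by
      intro i' hi'
      rw [Finset.mem_range] at hi'
      rw [dif_pos hi']
    rw [Finset.sum_congr rfl hcg, aux_sum_digit_eq b hb N (m r) (hm.1 r)]
  · -- term equality
    intro g hg
    simp only [Fintype.mem_piFinset, chainSet, Finset.mem_filter, Finset.mem_range] at hg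
    have hglt : ∀ (i : Fin N) (r : Fin (d - 1)), g i r < b := by
      intro i r
      have := (hg i).1 r
      have := hdig (i : ℕ)
      omega
    have hφdig : ∀ (r : Fin (d - 1)) (i : Fin N),
        (∑ i' ∈ range N, (if h : i' < N then g ⟨i', h⟩ r else 0) * b ^ i') / b ^ (i : ℕ) % b
          = g i r := by
      intro r i
      rw [aux_digit_sum b hb (i : ℕ) N _
        (fun i' hi' => by rw [dif_pos hi']; exact hglt ⟨i', hi'⟩ r) i.isLt]
      rw [dif_pos i.isLt]
    have hbr : ∀ (i : Fin N) (r : ℕ),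
        chainExt d n
            (fun r' : Fin (d - 1) =>
              ∑ i' ∈ range N, (if h : i' < N then g ⟨i', h⟩ r' else 0) * b ^ i') r
            / b ^ (i : ℕ) % b
          = chainExt d (n / b ^ (i : ℕ) % b) (g i) r := by
      intro i r
      rw [← chainExt_digit d n b (i : ℕ) _ r]
      congr 1
      funext r'
      exact hφdig r' i
    rw [Finset.prod_mul_distrib, Finset.prod_comm]
    congr 1
    · refine Finset.prod_congr rfl fun r _ => ?_
      rw [← Fin.prod_univ_eq_prod_range (fun i =>
        p (chainExt d n (fun r' : Fin (d - 1) =>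
              ∑ i' ∈ range N, (if h : i' < N then g ⟨i', h⟩ r' else 0) * b ^ i') (r + 1)
              / b ^ i % b -
            chainExt d n (fun r' : Fin (d - 1) =>
              ∑ i' ∈ range N, (if h : i' < N then g ⟨i', h⟩ r' else 0) * b ^ i') r
              / b ^ i % b)
          (X (r + 1) i)) N]
      refine Finset.prod_congr rfl fun i _ => ?_
      rw [hbr i (r + 1), hbr i r]
    · rw [← Fin.prod_univ_eq_prod_range (fun i =>
        s (n / b ^ i % b -
            chainExt d n (fun r' : Fin (d - 1) =>
              ∑ i' ∈ range N, (if h : i' < N then g ⟨i', h⟩ r' else 0) * b ^ i') (d - 1)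
              / b ^ i % b)
          (X d i)) N]
      refine Finset.prod_congr rfl fun i _ => ?_
      rw [hbr i (d - 1)]
end

section
/- Let b ≥ 2, N ≥ 0, d ≥ 2 be integers, and let n < b^N have base-b digits n_0, …, n_{N−1}. Let (p̄_k)_{k≥0} be a sequence of functions ℝ → ℝ satisfying p̄_k(x+y) = Σ_{j=0}^{k} p̄_j(x)·p̄_{k−j}(y) for all k ≥ 0, x, y ∈ ℝ. Then for any real numbers x_i^{(r)} (0 ≤ i ≤ N−1, 1 ≤ r ≤ d): ∏_{i=0}^{N−1} p̄_{n_i}(x_i^{(1)} + ⋯ + x_i^{(d)}) = Σ ( ∏_{i=0}^{N−1} p̄_{m_i^{(1)}}(x_i^{(1)}) · ∏_{i=0}^{N−1} p̄_{m_i^{(2)} − m_i^{(1)}}(x_i^{(2)}) ⋯ ∏_{i=0}^{N−1} p̄_{m_i^{(d−1)} − m_i^{(d−2)}}(x_i^{(d−1)}) · ∏_{i=0}^{N−1} p̄_{n_i − m_i^{(d−1)}}(x_i^{(d)}) ), the sum running over all chains of non-negative integers 0 ⪯_b m^{(1)} ⪯_b ⋯ ⪯_b m^{(d−1)} ⪯_b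 n, where m_i^{(r)} denotes the i-th base-b digit of m^{(r)}. -/
open Finset

lemma sum_digits_eq {b : ℕ} (hb : 2 ≤ b) :
    ∀ N n, n < b ^ N → ∑ i ∈ range N, n / b ^ i % b * b ^ i = n := by
  intro N
  induction N with
  | zero => intro n hn; simp at hn ⊢; omega
  | succ N ih =>
    intro n hn
    have hb0 : 0 < b := by omega
    rw [Finset.sum_range_succ']
    have h1 : ∀ i : ℕ, n / b ^ (i + 1) % b * b ^ (i + 1) = n / b / b ^ i % b * b ^ i * b := by
      intro i
      rw [pow_succ, ← mul_assoc]
      congr 2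
      rw [Nat.div_div_eq_div_mul, mul_comm]
    simp_rw [h1]
    rw [← Finset.sum_mul, ih (n / b) (by
      rw [Nat.div_lt_iff_lt_mul hb0]; rw [pow_succ] at hn; exact hn)]
    simp only [pow_zero, mul_one, Nat.div_one]
    rw [mul_comm, Nat.div_add_mod]

lemma digit_extract {b : ℕ} (hb : 2 ≤ b) :
    ∀ N (f : ℕ → ℕ), (∀ i, f i < b) → ∀ j < N,
      (∑ i ∈ range N, f i * b ^ i) / b ^ j % b = f j := by
  intro N
  induction N with
  | zero => intro f _ j hj; omega
  | succ N ih =>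
    intro f hf j hj
    have hb0 : 0 < b := by omega
    have hv : ∑ i ∈ range (N + 1), f i * b ^ i
        = f 0 + (∑ i ∈ range N, f (i + 1) * b ^ i) * b := by
      rw [Finset.sum_range_succ', Finset.sum_mul]
      simp_rw [pow_succ, ← mul_assoc]
      simp [add_comm]
    rcases Nat.eq_zero_or_pos j with rfl | hjpos
    · rw [hv]
      simp [Nat.add_mul_mod_self_right, Nat.mod_eq_of_lt (hf 0)]
    · obtain ⟨j', rfl⟩ : ∃ j', j = j' + 1 := ⟨j - 1, by omega⟩
      have hdiv : (∑ i ∈ range (N + 1), f i * b ^ i) / b ^ (j' + 1)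
          = (∑ i ∈ range N, f (i + 1) * b ^ i) / b ^ j' := by
        rw [pow_succ, mul_comm (b ^ j') b, ← Nat.div_div_eq_div_mul, hv]
        congr 1
        rw [Nat.add_mul_div_right _ _ hb0, Nat.div_eq_of_lt (hf 0)]
        omega
      rw [hdiv]
      exact ih (fun i => f (i + 1)) (fun i => hf (i + 1)) j' (by omega)

lemma digit_sum_lt {b : ℕ} (hb : 2 ≤ b) :
    ∀ N (f : ℕ → ℕ), (∀ i, f i < b) → ∑ i ∈ range N, f i * b ^ i < b ^ N := by
  intro N
  induction N with
  | zero => intro f _; simp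
  | succ N ih =>
    intro f hf
    rw [Finset.sum_range_succ]
    calc ∑ i ∈ range N, f i * b ^ i + f N * b ^ N
        < b ^ N + f N * b ^ N := by exact Nat.add_lt_add_right (ih f hf) _
      _ = (f N + 1) * b ^ N := by ring
      _ ≤ b * b ^ N := Nat.mul_le_mul_right _ (hf N)
      _ = b ^ (N + 1) := by rw [pow_succ, mul_comm]

lemma mono_of_local (g : ℕ → ℕ) (t : ℕ) (h : ∀ r < t, g r ≤ g (r + 1)) :
    ∀ a b', a ≤ b' → b' ≤ t → g a ≤ g b' := by
  intro a b'
  induction b' with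
  | zero => intro h1 _; interval_cases a; rfl
  | succ b' ih =>
    intro h1 h2
    rcases Nat.eq_or_lt_of_le h1 with rfl | hlt
    · rfl
    · exact le_trans (ih (by omega) (by omega)) (h b' (by omega))

lemma tele_sum (g : ℕ → ℕ) : ∀ t, (∀ r < t, g r ≤ g (r + 1)) →
    ∑ r ∈ range t, (g (r + 1) - g r) = g t - g 0 := by
  intro t
  induction t with
  | zero => simp
  | succ t ih =>
    intro h
    rw [Finset.sum_range_succ, ih (fun r hr => h r (by omega))]
    have h1 : g 0 ≤ g t := mono_of_local g (t + 1) h 0 t (by omega) (by omega)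
    have h2 : g t ≤ g (t + 1) := h t (by omega)
    omega

lemma pmult (p : ℕ → ℝ → ℝ)
    (hconv : ∀ (k : ℕ) (x y : ℝ),
      p k (x + y) = ∑ j ∈ range (k + 1), p j x * p (k - j) y) :
    ∀ e, 1 ≤ e → ∀ (k : ℕ) (x : ℕ → ℝ),
      p k (∑ r ∈ Finset.Icc 1 e, x r) =
        ∑ j ∈ Finset.Nat.antidiagonalTuple e k, ∏ r : Fin e, p (j r) (x ((r : ℕ) + 1)) := by
  intro e
  induction e with
  | zero => omega
  | succ e ih =>
    intro _ k x
    rcases Nat.eq_zero_or_pos e with rfl | he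
    · simp only [Finset.Icc_self, Finset.sum_singleton, Finset.Nat.antidiagonalTuple_one,
        Finset.sum_singleton, Fin.prod_univ_one]
      simp
    · have hstep : ∑ r ∈ Finset.Icc 1 (e + 1), x r = (∑ r ∈ Finset.Icc 1 e, x r) + x (e + 1) := by
        rw [← Finset.sum_Icc_succ_top (by omega : 1 ≤ e + 1)]
      rw [hstep, hconv]
      have hIH : ∀ j0 : ℕ, p j0 (∑ r ∈ Finset.Icc 1 e, x r) * p (k - j0) (x (e + 1))
          = ∑ t ∈ Finset.Nat.antidiagonalTuple e j0,
              (∏ r : Fin e, p (t r) (x ((r : ℕ) + 1))) * p (k - j0) (x (e + 1)) := by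
        intro j0
        rw [ih he j0 x, Finset.sum_mul]
      simp_rw [hIH]
      rw [Finset.sum_sigma']
      refine Finset.sum_nbij' (fun a => Fin.snoc a.2 (k - a.1))
        (fun j => ⟨∑ r : Fin e, j r.castSucc, Fin.init j⟩) ?_ ?_ ?_ ?_ ?_
      · rintro ⟨j0, t⟩ ha
        simp only [Finset.mem_sigma, Finset.mem_range, Finset.Nat.mem_antidiagonalTuple] at ha
        rw [Finset.Nat.mem_antidiagonalTuple, Fin.sum_univ_castSucc]
        simp only [Fin.snoc_castSucc, Fin.snoc_last]
        omega
      · intro j hj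
        rw [Finset.Nat.mem_antidiagonalTuple] at hj
        simp only [Finset.mem_sigma, Finset.mem_range, Finset.Nat.mem_antidiagonalTuple]
        constructor
        · rw [Fin.sum_univ_castSucc] at hj; omega
        · rfl
      · rintro ⟨j0, t⟩ ha
        simp only [Finset.mem_sigma, Finset.mem_range, Finset.Nat.mem_antidiagonalTuple] at ha
        have h1 : Fin.init (Fin.snoc t (k - j0) : Fin (e + 1) → ℕ) = t := Fin.init_snoc _ _
        have h2 : ∑ r : Fin e, (Fin.snoc t (k - j0) : Fin (e + 1) → ℕ) r.castSucc = j0 := by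
          simp only [Fin.snoc_castSucc]; exact ha.2
        exact Sigma.ext h2 (heq_of_eq h1)
      · intro j hj
        rw [Finset.Nat.mem_antidiagonalTuple, Fin.sum_univ_castSucc] at hj
        have hlast : k - ∑ r : Fin e, j r.castSucc = j (Fin.last e) := by omega
        simp only []
        rw [hlast]
        exact Fin.snoc_init_self j
      · rintro ⟨j0, t⟩ ha
        rw [Fin.prod_univ_castSucc]
        simp only [Fin.snoc_castSucc, Fin.snoc_last, Fin.coe_castSucc, Fin.val_last]


/-- auxiliary extension of a tuple `J` to a total function. -/
def Jext (N d : ℕ) (J : Fin N → Fin d → ℕ) (i s : ℕ) : ℕ :=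
  if hi : i < N then (if hs : s < d then J ⟨i, hi⟩ ⟨s, hs⟩ else 0) else 0

/-- inverse map: partial sums re-encoded as numbers. -/
def psi (b N d : ℕ) (J : Fin N → Fin d → ℕ) : Fin (d - 1) → ℕ :=
  fun r' => ∑ i ∈ range N, (∑ s ∈ range ((r' : ℕ) + 1), Jext N d J i s) * b ^ i

lemma jext_zero (N d : ℕ) (J : Fin N → Fin d → ℕ) (i s : ℕ) (h : N ≤ i ∨ d ≤ s) :
    Jext N d J i s = 0 := by
  unfold Jext
  rcases h with h | h
  · rw [dif_neg (by omega)]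
  · by_cases hi : i < N
    · rw [dif_pos hi, dif_neg (by omega)]
    · rw [dif_neg hi]

lemma jext_sum_eq (N d : ℕ) (J : Fin N → Fin d → ℕ) (i : ℕ) (hi : i < N) :
    ∑ s ∈ range d, Jext N d J i s = ∑ r : Fin d, J ⟨i, hi⟩ r := by
  rw [← Fin.sum_univ_eq_sum_range (fun s => Jext N d J i s) d]
  refine Finset.sum_congr rfl fun s _ => ?_
  simp [Jext, hi]

lemma jext_partial_le (b N d n : ℕ) (J : Fin N → Fin d → ℕ)
    (hJ : ∀ i : Fin N, ∑ r : Fin d, J i r = n / b ^ (i : ℕ) % b) (i : ℕ) (hi : i < N) (t : ℕ) :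
    ∑ s ∈ range t, Jext N d J i s ≤ n / b ^ i % b := by
  have h1 : ∑ s ∈ range t, Jext N d J i s ≤ ∑ s ∈ range (max t d), Jext N d J i s :=
    Finset.sum_le_sum_of_subset (Finset.range_subset_range.2 (le_max_left _ _))
  have h2 : ∑ s ∈ range (max t d), Jext N d J i s = ∑ s ∈ range d, Jext N d J i s := by
    refine (Finset.sum_subset (Finset.range_subset_range.2 (le_max_right _ _)) ?_).symm
    intro x _ hx
    exact jext_zero N d J i x (Or.inr (by simp only [Finset.mem_range] at hx; omega))
  rw [h2, jext_sum_eq N d J i hi, hJ ⟨i, hi⟩] at h1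
  exact h1

lemma jext_partial_lt (b N d n : ℕ) (hb : 2 ≤ b) (J : Fin N → Fin d → ℕ)
    (hJ : ∀ i : Fin N, ∑ r : Fin d, J i r = n / b ^ (i : ℕ) % b) (t : ℕ) (i : ℕ) :
    ∑ s ∈ range t, Jext N d J i s < b := by
  have hb0 : 0 < b := by omega
  by_cases hi : i < N
  · exact lt_of_le_of_lt (jext_partial_le b N d n J hJ i hi t) (Nat.mod_lt _ hb0)
  · rw [Finset.sum_eq_zero (fun s _ => jext_zero N d J i s (Or.inl (by omega)))]
    omega

lemma psi_digit (b N d n : ℕ) (hb : 2 ≤ b) (hd : 2 ≤ d) (J : Fin N → Fin d → ℕ)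
    (hJ : ∀ i : Fin N, ∑ r : Fin d, J i r = n / b ^ (i : ℕ) % b)
    (r : ℕ) (hr : r ≤ d) (i : ℕ) (hi : i < N) :
    chainExt d n (psi b N d J) r / b ^ i % b = ∑ s ∈ range r, Jext N d J i s := by
  have hb0 : 0 < b := by omega
  rcases Nat.eq_zero_or_pos r with rfl | hrpos
  · simp [chainExt]
  rcases eq_or_lt_of_le hr with rfl | hrd
  · have hce : chainExt r n (psi b N r J) r = n := by
      simp only [chainExt]; rw [if_neg (by omega), dif_neg (by omega)]
    rw [hce, jext_sum_eq N r J i hi, hJ ⟨i, hi⟩]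
  · have hcm : chainExt d n (psi b N d J) r = psi b N d J ⟨r - 1, by omega⟩ := by
      simp only [chainExt]; rw [if_neg (by omega), dif_pos (by omega : r - 1 < d - 1)]
    have hr1 : r - 1 + 1 = r := by omega
    have hpsi : psi b N d J ⟨r - 1, by omega⟩
        = ∑ i' ∈ range N, (∑ s ∈ range r, Jext N d J i' s) * b ^ i' := by
      simp only [psi]
      rw [hr1]
    rw [hcm, hpsi, digit_extract hb N _ (fun i' => jext_partial_lt b N d n hb J hJ r i') i hi]
/-- **Multinomial digital theorem for binomial-type sequences.**
For a renormalized binomial-type sequence `p̄` and `n < b^N` with base-`b` digits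
`n_i = n / b^i % b`, the product `∏_i p̄_{n_i}(x_i^{(1)} + ⋯ + x_i^{(d)})` equals the sum,
over all chains `0 ⪯_b m^{(1)} ⪯_b ⋯ ⪯_b m^{(d-1)} ⪯_b n` of non-negative integers,
of `(∏_i p̄_{m_i^{(1)}}(x_i^{(1)})) ⋯ (∏_i p̄_{m_i^{(d-1)} - m_i^{(d-2)}}(x_i^{(d-1)}))
· (∏_i p̄_{n_i - m_i^{(d-1)}}(x_i^{(d)}))`.  Here `X r i` denotes `x_i^{(r)}` for
`1 ≤ r ≤ d`, chains are encoded as tuples `m : Fin (d-1) → ℕ` (each entry lies in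
`{0, …, b^N - 1}`, which loses no generality since `m^{(r)} ⪯_b n < b^N`), and
`chainExt d n m` recovers the full chain with `m^{(0)} = 0` and `m^{(d)} = n`. -/
theorem multinomial_digital_theorem_binomial_type
    (b N d : ℕ) (hb : 2 ≤ b) (hd : 2 ≤ d) (n : ℕ) (hn : n < b ^ N)
    (p : ℕ → ℝ → ℝ)
    (hconv : ∀ (k : ℕ) (x y : ℝ),
      p k (x + y) = ∑ j ∈ range (k + 1), p j x * p (k - j) y)
    (X : ℕ → ℕ → ℝ) :
    ∏ i ∈ range N, p (n / b ^ i % b) (∑ r ∈ Finset.Icc 1 d, X r i) =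
      ∑ m ∈ (Fintype.piFinset fun _ : Fin (d - 1) => range (b ^ N)).filter
          (fun m => ∀ r ∈ range d, ∀ i ∈ range N,
            chainExt d n m r / b ^ i % b ≤ chainExt d n m (r + 1) / b ^ i % b),
        (∏ r ∈ range (d - 1), ∏ i ∈ range N,
            p (chainExt d n m (r + 1) / b ^ i % b - chainExt d n m r / b ^ i % b)
              (X (r + 1) i)) *
          ∏ i ∈ range N,
            p (n / b ^ i % b - chainExt d n m (d - 1) / b ^ i % b) (X d i) := by
  classical
  have hb0 : 0 < b := by omega
  have hd1 : d - 1 + 1 = d := by omega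
  have hc0 : ∀ m : Fin (d - 1) → ℕ, chainExt d n m 0 = 0 := by
    intro m; simp [chainExt]
  have hcd : ∀ (m : Fin (d - 1) → ℕ) (r : ℕ), d ≤ r → chainExt d n m r = n := by
    intro m r hr
    simp only [chainExt]; rw [if_neg (by omega), dif_neg (by omega)]
  have hcm : ∀ (m : Fin (d - 1) → ℕ) (r : ℕ) (hr : r ≠ 0) (h : r - 1 < d - 1),
      chainExt d n m r = m ⟨r - 1, h⟩ := by
    intro m r hr h
    simp only [chainExt]; rw [if_neg hr, dif_pos h]
  have h1 : ∏ i ∈ range N, p (n / b ^ i % b) (∑ r ∈ Finset.Icc 1 d, X r i)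
      = ∏ i ∈ range N, ∑ j ∈ Finset.Nat.antidiagonalTuple d (n / b ^ i % b),
          ∏ r : Fin d, p (j r) (X ((r : ℕ) + 1) i) :=
    Finset.prod_congr rfl fun i _ => pmult p hconv d (by omega) _ (fun r => X r i)
  have h2 : ∏ i ∈ range N, ∑ j ∈ Finset.Nat.antidiagonalTuple d (n / b ^ i % b),
          ∏ r : Fin d, p (j r) (X ((r : ℕ) + 1) i)
      = ∑ J ∈ Fintype.piFinset
          (fun i : Fin N => Finset.Nat.antidiagonalTuple d (n / b ^ (i : ℕ) % b)),
          ∏ i : Fin N, ∏ r : Fin d, p (J i r) (X ((r : ℕ) + 1) (i : ℕ)) := by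
    rw [← Fin.prod_univ_eq_prod_range (fun i => ∑ j ∈ Finset.Nat.antidiagonalTuple d (n / b ^ i % b),
          ∏ r : Fin d, p (j r) (X ((r : ℕ) + 1) i)) N]
    exact Finset.prod_univ_sum _ _
  rw [h1, h2]
  refine Eq.symm (Finset.sum_nbij'
    (fun m => fun (i : Fin N) (r : Fin d) =>
      chainExt d n m ((r : ℕ) + 1) / b ^ (i : ℕ) % b - chainExt d n m (r : ℕ) / b ^ (i : ℕ) % b)
    (fun J => psi b N d J) ?_ ?_ ?_ ?_ ?_)
  · -- forward membership
    intro m hm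
    rw [Finset.mem_filter] at hm
    obtain ⟨hm1, hm2⟩ := hm
    simp only [Finset.mem_range] at hm2
    rw [Fintype.mem_piFinset]
    intro i
    rw [Finset.Nat.mem_antidiagonalTuple, Fin.sum_univ_eq_sum_range
      (fun r => chainExt d n m (r + 1) / b ^ (i : ℕ) % b - chainExt d n m r / b ^ (i : ℕ) % b) d,
      tele_sum _ d (fun r hr => hm2 r hr (i : ℕ) i.isLt), hcd m d le_rfl, hc0 m]
    simp
  · -- backward membership
    intro J hJ'
    rw [Fintype.mem_piFinset] at hJ'
    have hJ : ∀ i : Fin N, ∑ r : Fin d, J i r = n / b ^ (i : ℕ) % b :=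
      fun i => Finset.Nat.mem_antidiagonalTuple.1 (hJ' i)
    rw [Finset.mem_filter]
    constructor
    · rw [Fintype.mem_piFinset]
      intro r'
      rw [Finset.mem_range]
      exact digit_sum_lt hb N _ (fun i' => jext_partial_lt b N d n hb J hJ _ i')
    · intro r hr i hi
      rw [Finset.mem_range] at hr hi
      rw [psi_digit b N d n hb hd J hJ r (by omega) i hi,
        psi_digit b N d n hb hd J hJ (r + 1) (by omega) i hi]
      exact Finset.sum_le_sum_of_subset (Finset.range_subset_range.2 (by omega))
  · -- left inverse
    intro m hm
    rw [Finset.mem_filter] at hm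
    obtain ⟨hm1, hm2⟩ := hm
    rw [Fintype.mem_piFinset] at hm1
    simp only [Finset.mem_range] at hm1 hm2
    funext r'
    show ∑ i ∈ range N, (∑ s ∈ range ((r' : ℕ) + 1), Jext N d
        (fun (i : Fin N) (r : Fin d) =>
          chainExt d n m ((r : ℕ) + 1) / b ^ (i : ℕ) % b
            - chainExt d n m (r : ℕ) / b ^ (i : ℕ) % b) i s) * b ^ i = m r'
    have hr' : (r' : ℕ) < d - 1 := r'.isLt
    have key : ∀ i ∈ range N, (∑ s ∈ range ((r' : ℕ) + 1), Jext N d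
        (fun (i : Fin N) (r : Fin d) =>
          chainExt d n m ((r : ℕ) + 1) / b ^ (i : ℕ) % b
            - chainExt d n m (r : ℕ) / b ^ (i : ℕ) % b) i s) * b ^ i
        = m r' / b ^ i % b * b ^ i := by
      intro i hi
      rw [Finset.mem_range] at hi
      congr 1
      have hterm : ∀ s ∈ range ((r' : ℕ) + 1), Jext N d
          (fun (i : Fin N) (r : Fin d) =>
            chainExt d n m ((r : ℕ) + 1) / b ^ (i : ℕ) % b
              - chainExt d n m (r : ℕ) / b ^ (i : ℕ) % b) i s
          = chainExt d n m (s + 1) / b ^ i % b - chainExt d n m s / b ^ i % b := by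
        intro s hs
        rw [Finset.mem_range] at hs
        have hs' : s < d := by omega
        simp [Jext, hi, hs']
      rw [Finset.sum_congr rfl hterm,
        tele_sum (fun s => chainExt d n m s / b ^ i % b) ((r' : ℕ) + 1)
          (fun s hs => hm2 s (by omega) i hi), hc0 m]
      have : chainExt d n m ((r' : ℕ) + 1) = m r' := by
        rw [hcm m ((r' : ℕ) + 1) (by omega) (by omega)]
        rfl
      rw [this]
      simp
    rw [Finset.sum_congr rfl key]
    exact sum_digits_eq hb N (m r') (hm1 r')
  · -- right inverse
    intro J hJ'
    rw [Fintype.mem_piFinset] at hJ'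
    have hJ : ∀ i : Fin N, ∑ r : Fin d, J i r = n / b ^ (i : ℕ) % b :=
      fun i => Finset.Nat.mem_antidiagonalTuple.1 (hJ' i)
    funext i r
    show chainExt d n (psi b N d J) ((r : ℕ) + 1) / b ^ (i : ℕ) % b
        - chainExt d n (psi b N d J) (r : ℕ) / b ^ (i : ℕ) % b = J i r
    rw [psi_digit b N d n hb hd J hJ ((r : ℕ) + 1) (by omega) (i : ℕ) i.isLt,
      psi_digit b N d n hb hd J hJ (r : ℕ) (by omega) (i : ℕ) i.isLt,
      Finset.sum_range_succ]
    have : Jext N d J (i : ℕ) (r : ℕ) = J i r := by simp [Jext, i.isLt, r.isLt]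
    omega
  · -- summand equality
    intro m hm
    have prodsplit : ∀ A : ℕ → ℝ, ∏ r ∈ range d, A r = (∏ r ∈ range (d - 1), A r) * A (d - 1) := by
      intro A
      conv_lhs => rw [show d = d - 1 + 1 by omega]
      rw [Finset.prod_range_succ]
    have e1 : (∏ i : Fin N, ∏ r : Fin d,
          p (chainExt d n m ((r : ℕ) + 1) / b ^ (i : ℕ) % b
              - chainExt d n m (r : ℕ) / b ^ (i : ℕ) % b) (X ((r : ℕ) + 1) (i : ℕ)))
        = ∏ r ∈ range d, ∏ i ∈ range N,
            p (chainExt d n m (r + 1) / b ^ i % b - chainExt d n m r / b ^ i % b)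
              (X (r + 1) i) := by
      rw [Finset.prod_comm]
      rw [← Fin.prod_univ_eq_prod_range (fun r => ∏ i ∈ range N,
        p (chainExt d n m (r + 1) / b ^ i % b - chainExt d n m r / b ^ i % b) (X (r + 1) i)) d]
      refine Finset.prod_congr rfl fun r _ => ?_
      rw [← Fin.prod_univ_eq_prod_range (fun i =>
        p (chainExt d n m ((r : ℕ) + 1) / b ^ i % b - chainExt d n m (r : ℕ) / b ^ i % b)
          (X ((r : ℕ) + 1) i)) N]
    rw [e1, prodsplit, hd1]
    congr 1
    refine Finset.prod_congr rfl fun i _ => ?_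
    rw [hcd m d le_rfl]
end

section
/- Let b ≥ 2 and N ≥ 0 be integers, and let n < b^N have base-b digits n_0, …, n_{N−1}. Denote by H_k the k-th probabilists' Hermite polynomial (generating function exp(xt − t²/2) = Σ_{k≥0} H_k(x) t^k/k!) and set H̄_k(x) = H_k(x)/k!. Then for all real x_0,…,x_{N−1}, y_0,…,y_{N−1}: ∏_{i=0}^{N−1} H̄_{n_i}(x_i + y_i) = Σ_{m ⪯_b n} ( ∏_{i=0}^{N−1} x_i^{m_i}/m_i! · ∏_{i=0}^{N−1} H̄_{n_i − m_i}(y_i) ), where the sum runs over all m digitally dominated by n in base b and m_i denotes the i-th base-b digit of m. -/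
open Finset
open Polynomial

lemma derivative_hermite (m : ℕ) :
    derivative (hermite m) = m • hermite (m - 1) := by
  induction m with
  | zero => simp [hermite_zero]
  | succ k ih =>
    rw [hermite_succ, derivative_sub, derivative_mul, derivative_X, one_mul, ih]
    cases k with
    | zero => simp [hermite_zero, hermite_one]
    | succ j =>
      simp only [Nat.succ_sub_one] at ih ⊢
      rw [derivative_smul, mul_smul_comm, add_sub_assoc, ← smul_sub, ← hermite_succ]
      conv_rhs => rw [succ_nsmul]
      rw [add_comm]

lemma hasseDeriv_hermite (i k : ℕ) :
    hasseDeriv i (hermite k) = (k.choose i) • hermite (k - i) := by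
  induction i with
  | zero => simp [hasseDeriv_zero]
  | succ j ih =>
    have hcomp := LinearMap.congr_fun (hasseDeriv_comp (R := ℤ) 1 j) (hermite k)
    simp only [LinearMap.comp_apply, hasseDeriv_one, LinearMap.smul_apply,
      Nat.choose_one_right, add_comm 1 j] at hcomp
    rw [ih, derivative_smul, derivative_hermite] at hcomp
    refine smul_right_injective (Polynomial ℤ) (show j + 1 ≠ 0 by omega) ?_
    show (j+1) • _ = (j+1) • _
    rw [← hcomp, smul_smul, smul_smul, Nat.sub_sub]
    congr 1
    rw [mul_comm (j+1) (k.choose (j+1)), Nat.choose_succ_right_eq]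

lemma hasseDeriv_map' {R S : Type*} [CommSemiring R] [CommSemiring S] (f : R →+* S)
    (k : ℕ) (p : Polynomial R) :
    hasseDeriv k (p.map f) = (hasseDeriv k p).map f := by
  ext n
  simp [hasseDeriv_coeff, coeff_map, map_mul]

lemma hermite_add_real (k : ℕ) (x y : ℝ) :
    (aeval (x + y) (hermite k) : ℝ) =
      ∑ j ∈ range (k + 1),
        (k.choose j : ℝ) * x ^ j * (aeval y (hermite (k - j)) : ℝ) := by
  set f := (algebraMap ℤ ℝ)
  set P : Polynomial ℝ := (hermite k).map f with hP
  have hdeg : (taylor y P).natDegree < k + 1 := by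
    rw [natDegree_taylor]
    exact lt_of_le_of_lt (natDegree_map_le)
      (by rw [natDegree_hermite]; omega)
  have h1 : (aeval (x + y) (hermite k) : ℝ) = P.eval (x + y) := by
    rw [hP, aeval_def, eval_map]
  rw [h1, ← taylor_eval y P x, eval_eq_sum_range' hdeg]
  refine sum_congr rfl fun j hj => ?_
  rw [taylor_coeff, hP, hasseDeriv_map', hasseDeriv_hermite, nsmul_eq_mul,
    Polynomial.map_mul, Polynomial.map_natCast, eval_mul, eval_natCast,
    aeval_def, eval_map]
  ring

lemma hermite_bar_add (k : ℕ) (x y : ℝ) :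
    (aeval (x + y) (hermite k) : ℝ) / (k.factorial : ℝ) =
      ∑ j ∈ range (k + 1),
        x ^ j / (j.factorial : ℝ) *
          ((aeval y (hermite (k - j)) : ℝ) / ((k - j).factorial : ℝ)) := by
  rw [hermite_add_real, sum_div]
  refine sum_congr rfl fun j hj => ?_
  have hjk : j ≤ k := Nat.lt_succ_iff.mp (mem_range.mp hj)
  have h := Nat.choose_mul_factorial_mul_factorial hjk
  have hR : (k.choose j : ℝ) * (j.factorial : ℝ) * ((k - j).factorial : ℝ)
      = (k.factorial : ℝ) := by exact_mod_cast congrArg (Nat.cast : ℕ → ℝ) h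
  have h1 : (j.factorial : ℝ) ≠ 0 := Nat.cast_ne_zero.mpr (Nat.factorial_ne_zero j)
  have h2 : ((k - j).factorial : ℝ) ≠ 0 := Nat.cast_ne_zero.mpr (Nat.factorial_ne_zero _)
  have h3 : (k.factorial : ℝ) ≠ 0 := Nat.cast_ne_zero.mpr (Nat.factorial_ne_zero k)
  field_simp
  rw [← hR]
  ring

lemma digit_mix (b q r N i : ℕ) (hb : 0 < b) (hi : i < N) :
    (q * b ^ N + r) / b ^ i % b = r / b ^ i % b := by
  have h : q * b ^ N + r = r + b ^ i * (q * b ^ (N - i)) := by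
    rw [← mul_assoc, mul_comm (b ^ i) q, mul_assoc, ← pow_add]
    rw [show i + (N - i) = N by omega]
    ring
  rw [h, Nat.add_mul_div_left _ _ (pow_pos hb i)]
  have h2 : q * b ^ (N - i) = q * b ^ (N - i - 1) * b := by
    rw [mul_assoc, ← pow_succ]
    congr 2
    omega
  rw [h2, Nat.add_mul_mod_self_right]

lemma digit_top_s15 (b q r N : ℕ) (hq : q < b) (hr : r < b ^ N) :
    (q * b ^ N + r) / b ^ N % b = q := by
  have hbN : 0 < b ^ N := pos_of_gt hr
  rw [add_comm, mul_comm q (b ^ N), Nat.add_mul_div_left _ _ hbN,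
    Nat.div_eq_of_lt hr, zero_add, Nat.mod_eq_of_lt hq]

lemma sum_range_mul_eq_s15 {M : Type*} [AddCommMonoid M] (a c : ℕ) (g : ℕ → M) :
    ∑ m ∈ range (a * c), g m
      = ∑ p ∈ range a ×ˢ range c, g (p.1 * c + p.2) := by
  refine Finset.sum_nbij' (fun m => (m / c, m % c)) (fun p => p.1 * c + p.2)
    ?_ ?_ ?_ ?_ ?_
  · intro m hm
    have hm' := mem_range.mp hm
    have hc : 0 < c := by
      rcases Nat.eq_zero_or_pos c with h | h
      · subst h; simp at hm'
      · exact h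
    simp only [mem_product, mem_range]
    exact ⟨(Nat.div_lt_iff_lt_mul hc).mpr hm', Nat.mod_lt _ hc⟩
  · intro p hp
    simp only [mem_product, mem_range] at hp
    have h1 : p.1 * c + p.2 < (p.1 + 1) * c := by nlinarith [hp.2]
    have h2 : (p.1 + 1) * c ≤ a * c := Nat.mul_le_mul_right c hp.1
    exact mem_range.mpr (lt_of_lt_of_le h1 h2)
  · intro m hm
    exact Nat.div_add_mod' m c
  · intro p hp
    simp only [mem_product, mem_range] at hp
    have h1 : (p.1 * c + p.2) / c = p.1 := by
      rw [add_comm, Nat.add_mul_div_right _ _ (by omega : 0 < c),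
        Nat.div_eq_of_lt hp.2, zero_add]
    have h2 : (p.1 * c + p.2) % c = p.2 := by
      rw [add_comm, Nat.add_mul_mod_self_right, Nat.mod_eq_of_lt hp.2]
    show ((p.1 * c + p.2) / c, (p.1 * c + p.2) % c) = p
    rw [h1, h2]
  · intro m hm
    rw [Nat.div_add_mod']

lemma digit_prod_sum (b : ℕ) (hb : 2 ≤ b) :
    ∀ (N n : ℕ), n < b ^ N → ∀ (f : ℕ → ℕ → ℝ),
    ∏ i ∈ range N, (∑ j ∈ range (n / b ^ i % b + 1), f i j) =
      ∑ m ∈ (range (b ^ N)).filter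
          (fun m => ∀ i ∈ range N, m / b ^ i % b ≤ n / b ^ i % b),
        ∏ i ∈ range N, f i (m / b ^ i % b) := by
  intro N
  induction N with
  | zero => intro n hn f; simp
  | succ N ih =>
    intro n hn f
    have hb0 : 0 < b := by omega
    have hbN : 0 < b ^ N := pow_pos hb0 N
    have hn' : n % b ^ N < b ^ N := Nat.mod_lt _ hbN
    have hdig : ∀ i, i < N → n / b ^ i % b = (n % b ^ N) / b ^ i % b := by
      intro i hi
      conv_lhs => rw [← Nat.div_add_mod n (b ^ N), mul_comm (b ^ N) (n / b ^ N)]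
      exact digit_mix b (n / b ^ N) (n % b ^ N) N i hb0 hi
    have htb : n / b ^ N % b < b := Nat.mod_lt _ hb0
    rw [prod_range_succ]
    have hL : ∏ i ∈ range N, (∑ j ∈ range (n / b ^ i % b + 1), f i j)
        = ∑ m ∈ (range (b ^ N)).filter
            (fun m => ∀ i ∈ range N, m / b ^ i % b ≤ (n % b ^ N) / b ^ i % b),
          ∏ i ∈ range N, f i (m / b ^ i % b) := by
      rw [← ih (n % b ^ N) hn' f]
      exact prod_congr rfl fun i hi => by rw [hdig i (mem_range.mp hi)]
    rw [hL]
    conv_rhs => rw [sum_filter, pow_succ, mul_comm (b ^ N) b,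
      sum_range_mul_eq_s15 b (b ^ N), sum_product]
    have hterm : ∀ q ∈ range b, ∀ r ∈ range (b ^ N),
        (if (∀ i ∈ range (N + 1), (q * b ^ N + r) / b ^ i % b ≤ n / b ^ i % b)
          then ∏ i ∈ range (N + 1), f i ((q * b ^ N + r) / b ^ i % b) else 0)
        = (if (∀ i ∈ range N, r / b ^ i % b ≤ (n % b ^ N) / b ^ i % b)
            then ∏ i ∈ range N, f i (r / b ^ i % b) else 0) *
          (if q ≤ n / b ^ N % b then f N q else 0) := by
      intro q hq r hr
      have hq' := mem_range.mp hq
      have hr' := mem_range.mp hr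
      have hd1 : ∀ i, i < N → (q * b ^ N + r) / b ^ i % b = r / b ^ i % b :=
        fun i hi => digit_mix b q r N i hb0 hi
      have hd2 : (q * b ^ N + r) / b ^ N % b = q := digit_top_s15 b q r N hq' hr'
      have hcond : (∀ i ∈ range (N + 1), (q * b ^ N + r) / b ^ i % b ≤ n / b ^ i % b)
          ↔ ((∀ i ∈ range N, r / b ^ i % b ≤ (n % b ^ N) / b ^ i % b)
              ∧ q ≤ n / b ^ N % b) := by
        constructor
        · intro h
          refine ⟨fun i hi => ?_, ?_⟩
          · have hi' := mem_range.mp hi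
            have := h i (mem_range.mpr (by omega))
            rwa [hd1 i hi', hdig i hi'] at this
          · have := h N (mem_range.mpr (by omega))
            rwa [hd2] at this
        · rintro ⟨h1, h2⟩ i hi
          rcases Nat.lt_succ_iff_lt_or_eq.mp (mem_range.mp hi) with hi' | rfl
          · rw [hd1 i hi', hdig i hi']
            exact h1 i (mem_range.mpr hi')
          · rwa [hd2]
      have hprod : ∏ i ∈ range (N + 1), f i ((q * b ^ N + r) / b ^ i % b)
          = (∏ i ∈ range N, f i (r / b ^ i % b)) * f N q := by
        rw [prod_range_succ, hd2]
        congr 1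
        exact prod_congr rfl fun i hi => by rw [hd1 i (mem_range.mp hi)]
      simp only [hcond, hprod]
      by_cases hA : (∀ i ∈ range N, r / b ^ i % b ≤ (n % b ^ N) / b ^ i % b) <;>
        by_cases hB : q ≤ n / b ^ N % b <;> simp [hA, hB]
    rw [sum_congr rfl fun q hq => sum_congr rfl fun r hr => hterm q hq r hr]
    simp only [← sum_mul]
    rw [← mul_sum, ← sum_filter, ← sum_filter]
    congr 1
    have : filter (fun q => q ≤ n / b ^ N % b) (range b) = range (n / b ^ N % b + 1) := by
      ext a
      simp only [mem_filter, mem_range]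
      omega
    rw [this]

/-- **Digital binomial theorem for probabilists' Hermite polynomials.**
With `H̄_k(x) = H_k(x)/k!` (normalized probabilists' Hermite polynomial, generating
function `exp(xt - t²/2) = Σ_k H_k(x) t^k/k!`), for `n < b^N` with base-`b` digits
`n_i = n / b^i % b`:
`∏_i H̄_{n_i}(x_i + y_i) = Σ_{m ⪯_b n} (∏_i x_i^{m_i}/m_i!) (∏_i H̄_{n_i - m_i}(y_i))`. -/
theorem hermite_digital_binomial_theorem
    (b N : ℕ) (hb : 2 ≤ b) (n : ℕ) (hn : n < b ^ N) (x y : ℕ → ℝ) :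
    ∏ i ∈ range N,
        (Polynomial.aeval (x i + y i) (Polynomial.hermite (n / b ^ i % b)) : ℝ) /
          (Nat.factorial (n / b ^ i % b) : ℝ) =
      ∑ m ∈ (range (b ^ N)).filter
          (fun m => ∀ i ∈ range N, m / b ^ i % b ≤ n / b ^ i % b),
        (∏ i ∈ range N, x i ^ (m / b ^ i % b) / (Nat.factorial (m / b ^ i % b) : ℝ)) *
          ∏ i ∈ range N,
            (Polynomial.aeval (y i)
                (Polynomial.hermite (n / b ^ i % b - m / b ^ i % b)) : ℝ) /
              (Nat.factorial (n / b ^ i % b - m / b ^ i % b) : ℝ) := by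
  have key := digit_prod_sum b hb N n hn
    (fun i j => x i ^ j / (j.factorial : ℝ) *
      ((aeval (y i) (hermite (n / b ^ i % b - j)) : ℝ) /
        ((n / b ^ i % b - j).factorial : ℝ)))
  calc ∏ i ∈ range N,
        (aeval (x i + y i) (hermite (n / b ^ i % b)) : ℝ) /
          ((n / b ^ i % b).factorial : ℝ)
      = ∏ i ∈ range N, ∑ j ∈ range (n / b ^ i % b + 1),
          x i ^ j / (j.factorial : ℝ) *
            ((aeval (y i) (hermite (n / b ^ i % b - j)) : ℝ) /
              ((n / b ^ i % b - j).factorial : ℝ)) := by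
        exact prod_congr rfl fun i _ => hermite_bar_add (n / b ^ i % b) (x i) (y i)
    _ = _ := by
        rw [key]
        exact sum_congr rfl fun m _ => prod_mul_distrib
end

section
/- (Callan's digital binomial theorem.) Let n be a non-negative integer and let s(·) denote the binary sum-of-digits function. Then for all real (or commuting indeterminate) x, y: (x + y)^{s(n)} = Σ_{m : 0 ≤ m ≤ n, m ⪯_2 n} x^{s(m)} · y^{s(n−m)}, where the sum runs over all m such that the pair (m, n−m) is carry-free, i.e., the addition of m and n−m in binary produces no carries; equivalently, every binary digit of m is at most the corresponding binary digit of n. -/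
open Finset

namespace CallanAux

lemma digits_sum_eq_length (n : ℕ) : (Nat.digits 2 n).sum = n.bitIndices.length := by
  induction n using Nat.strong_induction_on with
  | _ n ih =>
    match n with
    | 0 => simp
    | (n+1) =>
      rcases Nat.even_or_odd (n+1) with ⟨k, hk⟩ | ⟨k, hk⟩
      · have hk2 : n + 1 = 2 * k := by omega
        have hkpos : 0 < k := by omega
        rw [hk2, Nat.digits_def' (by norm_num) (by omega), Nat.bitIndices_two_mul]
        simp only [List.sum_cons, List.length_map]
        rw [Nat.mul_div_cancel_left _ (by norm_num), Nat.mul_mod_right]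
        rw [ih k (by omega)]
        simp
      · have hk2 : n + 1 = 2 * k + 1 := by omega
        rw [hk2, Nat.digits_def' (by norm_num) (by omega), Nat.bitIndices_two_mul_add_one]
        simp only [List.sum_cons, List.length_cons, List.length_map]
        have h1 : (2 * k + 1) % 2 = 1 := by omega
        have h2 : (2 * k + 1) / 2 = k := by omega
        rw [h1, h2, ih k (by omega)]
        omega

lemma mem_bitIndices_iff (i n : ℕ) : i ∈ n.bitIndices ↔ n / 2 ^ i % 2 = 1 := by
  induction i generalizing n with
  | zero =>
    rcases Nat.even_or_odd n with ⟨k, hk⟩ | ⟨k, hk⟩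
    · have hk2 : n = 2 * k := by omega
      rw [hk2, Nat.bitIndices_two_mul]
      simp only [pow_zero, Nat.div_one, Nat.mul_mod_right, List.mem_map]
      constructor
      · rintro ⟨a, -, ha⟩; omega
      · omega
    · have hk2 : n = 2 * k + 1 := by omega
      rw [hk2, Nat.bitIndices_two_mul_add_one]
      simp only [pow_zero, Nat.div_one, List.mem_cons]
      constructor
      · intro _; omega
      · intro _; left; trivial
  | succ i ih =>
    have hdiv : ∀ m : ℕ, m / 2 ^ (i + 1) = (m / 2) / 2 ^ i := by
      intro m
      rw [pow_succ, mul_comm, Nat.div_div_eq_div_mul]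
    rcases Nat.even_or_odd n with ⟨k, hk⟩ | ⟨k, hk⟩
    · have hk2 : n = 2 * k := by omega
      rw [hk2, Nat.bitIndices_two_mul, hdiv]
      have h2 : 2 * k / 2 = k := by omega
      rw [h2, ← ih k]
      simp only [List.mem_map]
      constructor
      · rintro ⟨a, ha, haa⟩
        have : a = i := by omega
        rwa [this] at ha
      · intro h; exact ⟨i, h, rfl⟩
    · have hk2 : n = 2 * k + 1 := by omega
      rw [hk2, Nat.bitIndices_two_mul_add_one, hdiv]
      have h2 : (2 * k + 1) / 2 = k := by omega
      rw [h2, ← ih k]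
      simp only [List.mem_cons, List.mem_map]
      constructor
      · rintro (h | ⟨a, ha, haa⟩)
        · omega
        · have : a = i := by omega
          rwa [this] at ha
      · intro h; exact Or.inr ⟨i, h, rfl⟩

lemma nodup_bitIndices (n : ℕ) : n.bitIndices.Nodup :=
  Nat.bitIndices_sorted.nodup

lemma sum_toFinset_bitIndices (n : ℕ) :
    ∑ i ∈ n.bitIndices.toFinset, 2 ^ i = n := by
  rw [List.sum_toFinset _ (nodup_bitIndices n)]
  exact Nat.twoPowSum_bitIndices n

lemma bitIndices_sum_pow (A : Finset ℕ) :
    (∑ i ∈ A, 2 ^ i).bitIndices = A.sort (· ≤ ·) := by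
  have hs : List.SortedLT (A.sort (· ≤ ·)) := Finset.sortedLT_sort A
  have h1 : ∑ i ∈ A, 2 ^ i = ((A.sort (· ≤ ·)).map (fun i => 2 ^ i)).sum := by
    rw [← List.sum_toFinset _ (Finset.sort_nodup _ _)]
    rw [Finset.sort_toFinset]
  rw [h1, Nat.bitIndices_twoPowsum hs]

lemma toFinset_bitIndices_sum_pow (A : Finset ℕ) :
    (∑ i ∈ A, 2 ^ i).bitIndices.toFinset = A := by
  rw [bitIndices_sum_pow, Finset.sort_toFinset]

lemma digits_sum_sum_pow (A : Finset ℕ) :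
    (Nat.digits 2 (∑ i ∈ A, 2 ^ i)).sum = A.card := by
  rw [digits_sum_eq_length, bitIndices_sum_pow, Finset.length_sort]

end CallanAux

/-- **Callan's digital binomial theorem.**
Let `s(n) = (Nat.digits 2 n).sum` be the binary sum-of-digits function.  Then
`(x + y)^{s(n)} = Σ x^{s(m)} y^{s(n-m)}`, summed over all `0 ≤ m ≤ n` such that
`(m, n-m)` is carry-free, i.e. every binary digit of `m` is at most the corresponding
binary digit of `n` (`m ⪯_2 n`; positions `i ≤ n` suffice since `m ≤ n < 2^{n+1}`). -/
theorem callan_digital_binomial_theorem (n : ℕ) (x y : ℝ) :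
    (x + y) ^ (Nat.digits 2 n).sum =
      ∑ m ∈ @Finset.filter ℕ
          (fun m => ∀ i ∈ range (n + 1), m / 2 ^ i % 2 ≤ n / 2 ^ i % 2)
          (fun _ => Finset.decidableDforallFinset) (range (n + 1)),
        x ^ (Nat.digits 2 m).sum * y ^ (Nat.digits 2 (n - m)).sum := by
  classical
  set T : Finset ℕ := n.bitIndices.toFinset with hT
  have hsumT : ∑ i ∈ T, 2 ^ i = n := CallanAux.sum_toFinset_bitIndices n
  have hmemT : ∀ i, i ∈ T ↔ n / 2 ^ i % 2 = 1 := by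
    intro i
    rw [hT, List.mem_toFinset, CallanAux.mem_bitIndices_iff]
  have hcardT : (Nat.digits 2 n).sum = T.card := by
    rw [CallanAux.digits_sum_eq_length, hT, List.toFinset_card_of_nodup
      (CallanAux.nodup_bitIndices n)]
  -- the subset-sum facts
  have key : ∀ A ∈ T.powerset,
      ∑ i ∈ A, 2 ^ i ≤ n ∧ n - ∑ i ∈ A, 2 ^ i = ∑ i ∈ T \ A, 2 ^ i := by
    intro A hA
    rw [Finset.mem_powerset] at hA
    have hsplit : ∑ i ∈ A, 2 ^ i + ∑ i ∈ T \ A, 2 ^ i = n := by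
      rw [← Finset.sum_union (Finset.disjoint_sdiff), Finset.union_sdiff_of_subset hA, hsumT]
    omega
  rw [hcardT]
  have hprod : (x + y) ^ T.card =
      ∑ A ∈ T.powerset, x ^ A.card * y ^ (T.card - A.card) := by
    have := Finset.prod_add (fun _ : ℕ => x) (fun _ : ℕ => y) T
    simp only [Finset.prod_const] at this
    rw [this]
    refine Finset.sum_congr rfl ?_
    intro A hA
    rw [Finset.mem_powerset] at hA
    rw [Finset.card_sdiff_of_subset hA]
  rw [hprod]
  refine Finset.sum_nbij' (fun A => ∑ i ∈ A, 2 ^ i)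
    (fun m => m.bitIndices.toFinset) ?_ ?_ ?_ ?_ ?_
  · -- maps into the filter
    intro A hA
    obtain ⟨hle, -⟩ := key A hA
    rw [Finset.mem_powerset] at hA
    rw [Finset.mem_filter]
    refine ⟨Finset.mem_range.mpr (by omega), ?_⟩
    intro i _
    have h1 : (∑ j ∈ A, 2 ^ j) / 2 ^ i % 2 < 2 := Nat.mod_lt _ (by norm_num)
    rcases Nat.eq_zero_or_pos ((∑ j ∈ A, 2 ^ j) / 2 ^ i % 2) with h | h
    · omega
    · have hone : (∑ j ∈ A, 2 ^ j) / 2 ^ i % 2 = 1 := by omega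
      have hiA : i ∈ A := by
        have := (CallanAux.mem_bitIndices_iff i (∑ j ∈ A, 2 ^ j)).mpr hone
        rwa [CallanAux.bitIndices_sum_pow, Finset.mem_sort] at this
      have : i ∈ T := hA hiA
      rw [hmemT] at this
      omega
  · -- inverse maps into powerset
    intro m hm
    rw [Finset.mem_filter, Finset.mem_range] at hm
    obtain ⟨hmn, hbits⟩ := hm
    rw [Finset.mem_powerset]
    intro i hi
    rw [List.mem_toFinset, CallanAux.mem_bitIndices_iff] at hi
    have hile : i ∈ range (n + 1) := by
      rw [Finset.mem_range]
      by_contra h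
      have h2 : n < 2 ^ i := lt_of_lt_of_le (Nat.lt_two_pow_self (n := n))
        (Nat.pow_le_pow_right (by norm_num) (by omega))
      have : m / 2 ^ i = 0 := Nat.div_eq_of_lt (by omega)
      rw [this] at hi
      simp at hi
    have := hbits i hile
    rw [hmemT]
    omega
  · intro A hA
    exact CallanAux.toFinset_bitIndices_sum_pow A
  · intro m hm
    rw [List.sum_toFinset _ (CallanAux.nodup_bitIndices m)]
    exact Nat.twoPowSum_bitIndices m
  · intro A hA
    obtain ⟨-, hsub⟩ := key A hA
    rw [CallanAux.digits_sum_sum_pow, hsub, CallanAux.digits_sum_sum_pow]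
    rw [Finset.mem_powerset] at hA
    rw [Finset.card_sdiff_of_subset hA]
end

section
/- (Non-binary digital binomial theorem.) Let b ≥ 2 and N ≥ 0 be integers and let n < b^N have base-b digits n_0, …, n_{N−1}. For a real number t and integer k ≥ 0, write C(t + k − 1, k) = t(t+1)⋯(t+k−1)/k! (the ascending factorial divided by k!). Then for all real x, y: ∏_{i=0}^{N−1} C(x + y + n_i − 1, n_i) = Σ_{m ⪯_b n} ( ∏_{i=0}^{N−1} C(x + m_i − 1, m_i) · ∏_{i=0}^{N−1} C(y + n_i − m_i − 1, n_i − m_i) ), where the sum runs over all non-negative integers m digitally dominated by n in base b and m_i denotes the i-th base-b digit of m. -/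
open Finset

/-- The generalized binomial coefficient `C(t + k - 1, k) = t(t+1)⋯(t+k-1)/k!`,
the ascending (Pochhammer) factorial of `t` of length `k` divided by `k!`. -/
noncomputable def ascBinom (t : ℝ) (k : ℕ) : ℝ :=
  (ascPochhammer ℝ k).eval t / (Nat.factorial k : ℝ)

lemma descP_smeval_eq_eval (k : ℕ) (r : ℝ) :
    (descPochhammer ℤ k).smeval r = (descPochhammer ℝ k).eval r := by
  rw [← Polynomial.aeval_eq_smeval, Polynomial.aeval_def, ← Polynomial.eval_map,
    descPochhammer_map]

lemma desc_vandermonde (r s : ℝ) (k : ℕ) :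
    (descPochhammer ℝ k).eval (r + s) = ∑ ij ∈ Finset.HasAntidiagonal.antidiagonal k,
      (Nat.choose k ij.1 : ℝ) *
        ((descPochhammer ℝ ij.1).eval r * (descPochhammer ℝ ij.2).eval s) := by
  have h := Ring.descPochhammer_smeval_add (R := ℝ) (r := r) (s := s) k (Commute.all r s)
  simp only [descP_smeval_eq_eval] at h
  exact h

lemma ascBinom_vandermonde (x y : ℝ) (k : ℕ) :
    ascBinom (x + y) k = ∑ j ∈ range (k + 1), ascBinom x j * ascBinom y (k - j) := by
  have hneg : ∀ (t : ℝ) (m : ℕ),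
      (ascPochhammer ℝ m).eval t = (-1) ^ m * (descPochhammer ℝ m).eval (-t) := by
    intro t m
    have := ascPochhammer_eval_neg_eq_descPochhammer ℝ (-t) m
    rwa [neg_neg] at this
  rw [← Finset.Nat.sum_antidiagonal_eq_sum_range_succ
    (fun i j => ascBinom x i * ascBinom y j)]
  unfold ascBinom
  rw [hneg, neg_add, desc_vandermonde, mul_sum, sum_div]
  refine Finset.sum_congr rfl fun ij hij => ?_
  obtain ⟨i, j⟩ := ij
  have hk : i + j = k := Finset.HasAntidiagonal.mem_antidiagonal.mp hij
  have h1 : (ascPochhammer ℝ i).eval x = (-1) ^ i * (descPochhammer ℝ i).eval (-x) := hneg x i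
  have h2 : (ascPochhammer ℝ j).eval y = (-1) ^ j * (descPochhammer ℝ j).eval (-y) := hneg y j
  have hfac : (k.factorial : ℝ) = k.choose i * (i.factorial * j.factorial) := by
    rw [← hk, ← Nat.choose_mul_factorial_mul_factorial (Nat.le_add_right i j),
      Nat.add_sub_cancel_left]
    push_cast
    ring
  have hi : (i.factorial : ℝ) ≠ 0 := Nat.cast_ne_zero.mpr (Nat.factorial_ne_zero i)
  have hj : (j.factorial : ℝ) ≠ 0 := Nat.cast_ne_zero.mpr (Nat.factorial_ne_zero j)
  have hc : (k.choose i : ℝ) ≠ 0 := by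
    rw [← hk]
    exact Nat.cast_ne_zero.mpr (Nat.choose_pos (Nat.le_add_right i j)).ne'
  have hsign : ((-1 : ℝ)) ^ k = (-1) ^ i * (-1) ^ j := by rw [← pow_add, hk]
  rw [h1, h2, hsign, hfac]
  field_simp

/-- **Non-binary digital binomial theorem.**
For `b ≥ 2`, `n < b^N` with base-`b` digits `n_i = n / b^i % b`, and real `x, y`:
`∏_i C(x + y + n_i - 1, n_i) =
  Σ_{m ⪯_b n} (∏_i C(x + m_i - 1, m_i)) (∏_i C(y + n_i - m_i - 1, n_i - m_i))`,
where `C(t + k - 1, k) = t(t+1)⋯(t+k-1)/k!`. -/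
theorem nonbinary_digital_binomial_theorem
    (b N : ℕ) (hb : 2 ≤ b) (n : ℕ) (hn : n < b ^ N) (x y : ℝ) :
    ∏ i ∈ range N, ascBinom (x + y) (n / b ^ i % b) =
      ∑ m ∈ (range (b ^ N)).filter
          (fun m => ∀ i ∈ range N, m / b ^ i % b ≤ n / b ^ i % b),
        (∏ i ∈ range N, ascBinom x (m / b ^ i % b)) *
          ∏ i ∈ range N, ascBinom y (n / b ^ i % b - m / b ^ i % b) := by
  induction N generalizing n with
  | zero =>
    simp only [pow_zero, Nat.lt_one_iff] at hn
    subst hn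
    simp [ascBinom]
  | succ N ih =>
    have hb0 : 0 < b := by omega
    have hdig : ∀ m i : ℕ, m / b ^ (i + 1) % b = m / b / b ^ i % b := by
      intro m i
      rw [pow_succ', Nat.div_div_eq_div_mul]
    have hn' : n / b < b ^ N :=
      Nat.div_lt_of_lt_mul (by rwa [← pow_succ'])
    have hm0 : ∀ r q : ℕ, r < b → (r + b * q) % b = r := by
      intro r q hr
      rw [Nat.add_mul_mod_self_left, Nat.mod_eq_of_lt hr]
    have hmq : ∀ r q : ℕ, r < b → (r + b * q) / b = q := by
      intro r q hr
      rw [Nat.add_mul_div_left _ _ hb0, Nat.div_eq_of_lt hr, zero_add]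
    have hnb : n % b < b := Nat.mod_lt _ hb0
    have hmem : ∀ r q : ℕ, r < b → q < b ^ N → r + b * q < b ^ (N + 1) := by
      intro r q hr hq
      calc r + b * q < b + b * q := by omega
        _ = b * (q + 1) := by ring
        _ ≤ b * b ^ N := Nat.mul_le_mul_left b hq
        _ = b ^ (N + 1) := (pow_succ' b N).symm
    rw [prod_range_succ' (fun i => ascBinom (x + y) (n / b ^ i % b)) N]
    simp only [hdig, pow_zero, Nat.div_one]
    rw [ih (n / b) hn', ascBinom_vandermonde, Finset.sum_mul_sum, Finset.sum_comm,
      ← Finset.sum_product']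
    refine Finset.sum_nbij' (fun p => p.1 + b * p.2) (fun m => (m % b, m / b))
      ?_ ?_ ?_ ?_ ?_
    · rintro ⟨r, q⟩ hp
      simp only [mem_product, mem_range, mem_filter] at hp
      obtain ⟨hr, hq, hcond⟩ := hp
      have hrb : r < b := by omega
      simp only [mem_filter, mem_range]
      refine ⟨hmem r q hrb hq, ?_⟩
      intro i hi
      match i with
      | 0 => simpa [hm0 r q hrb] using (by omega : r ≤ n % b)
      | Nat.succ j =>
        rw [hdig, hdig, hmq r q hrb]
        exact hcond j (by omega)
    · intro m hm
      simp only [mem_filter, mem_range] at hm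
      obtain ⟨hmlt, hcond⟩ := hm
      simp only [mem_product, mem_range, mem_filter]
      have h0 := hcond 0 (by omega)
      simp only [pow_zero, Nat.div_one] at h0
      refine ⟨by omega, Nat.div_lt_of_lt_mul (by rwa [← pow_succ']), ?_⟩
      intro i hi
      have := hcond (i + 1) (by omega)
      rwa [hdig, hdig] at this
    · rintro ⟨r, q⟩ hp
      simp only [mem_product, mem_range, mem_filter] at hp
      have hrb : r < b := by omega
      simp [hm0 r q hrb, hmq r q hrb]
    · intro m hm
      simp [Nat.mod_add_div]
    · rintro ⟨r, q⟩ hp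
      simp only [mem_product, mem_range, mem_filter] at hp
      obtain ⟨hr, hq, hcond⟩ := hp
      have hrb : r < b := by omega
      rw [prod_range_succ' (fun i => ascBinom x ((r + b * q) / b ^ i % b)) N,
        prod_range_succ'
          (fun i => ascBinom y (n / b ^ i % b - (r + b * q) / b ^ i % b)) N]
      simp only [hdig, pow_zero, Nat.div_one, hm0 r q hrb, hmq r q hrb]
      ring
end
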